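/- arXiv:1810.00970 — 6 statements merged into one kernel-verified Lean document; each statement's English description precedes it below -/
import Mathlib

section
/- Let n ≥ 1 and r_n = n(n+1)/2. Let M be the set of dominant words over {1,…,n}, and for μ, μ' ∈ M define μ ⊙ μ' := maxSh(μ, μ'), the lexicographically greatest shuffle of μ and μ'. Then μ ⊙ μ' is again a dominant word, (M, ⊙) is a commutative monoid whose identity is the empty word, and the multiplicity-vector map μ ↦ v(μ) is a monoid isomorphism from (M, ⊙) onto (ℕ^{r_n}, +). -/
/-- `IsShuffle u v w` : the word `w` is a shuffle (interleaving) of the words `u` and `v`. -/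
inductive IsShuffle : List ℕ → List ℕ → List ℕ → Prop
  | nil : IsShuffle [] [] []
  | left (a : ℕ) {u v w : List ℕ} : IsShuffle u v w → IsShuffle (a :: u) v (a :: w)
  | right (a : ℕ) {u v w : List ℕ} : IsShuffle u v w → IsShuffle u (a :: v) (a :: w)

/-- The segment ⟨k,l⟩, i.e. the word (k, k+1, …, l). -/
def segWord (k l : ℕ) : List ℕ := List.range' k (l + 1 - k)

/-- `w` is a segment of the alphabet {1,…,n}. -/
def IsSegment (n : ℕ) (w : List ℕ) : Prop :=
  ∃ k l : ℕ, 1 ≤ k ∧ k ≤ l ∧ l ≤ n ∧ w = segWord k l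

/-- A dominant word of type `A_n`: a concatenation of segments in weakly decreasing
lexicographic order (this is then automatically the canonical factorization). -/
def IsDominant (n : ℕ) (w : List ℕ) : Prop :=
  ∃ fs : List (List ℕ), List.Chain' (· ≥ ·) fs ∧ (∀ u ∈ fs, IsSegment n u) ∧ fs.flatten = w

/-- The segments of {1,…,n}, enumerated in decreasing lexicographic order
(first component descending, then second component descending). -/
def segEnum (n : ℕ) : List (ℕ × ℕ) :=
  ((List.range' 1 n).reverse.map fun k =>
    (List.range' k (n + 1 - k)).reverse.map fun l => (k, l)).flatten

/-- A multiplicity vector: a function supported on the valid segments of {1,…,n}. -/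
def SuppValid (n : ℕ) (c : ℕ × ℕ → ℕ) : Prop :=
  ∀ p : ℕ × ℕ, c p ≠ 0 → 1 ≤ p.1 ∧ p.1 ≤ p.2 ∧ p.2 ≤ n

/-- The word obtained from a multiplicity vector by concatenating the segments,
with the given multiplicities, in decreasing lexicographic order.  This is the inverse of
the multiplicity-vector map `μ ↦ v(μ)`. -/
def buildWord (n : ℕ) (c : ℕ × ℕ → ℕ) : List ℕ :=
  ((segEnum n).map fun p => (List.replicate (c p) (segWord p.1 p.2)).flatten).flatten

/-! Cut a dominant word into its weakly decreasing list of segments. The greatest shuffle of two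
dominant words is the word of the merged (still decreasing) list of their segments: if `⟨k, l⟩`
is the largest segment of the merge, a shuffle that begins with `k` and leaves the run
`k, k+1, …, l` before its end puts a letter `≤ k` where the merge has a larger one. Hence `⊙` adds
multiplicity vectors. A word has only one factorization into a decreasing list of segments, so
the multiplicity map is a bijection onto `ℕ^{r_n}`, and the monoid laws of `⊙` are those of `+`.
-/

theorem IsShuffle.swap {u v w : List ℕ} (h : IsShuffle u v w) : IsShuffle v u w := by
  induction h with
  | nil => exact .nil
  | left a _ ih => exact .right a ih
  | right a _ ih => exact .left a ih

theorem isShuffle_nil_right (u : List ℕ) : IsShuffle u [] u := by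
  induction u with
  | nil => exact .nil
  | cons a u ih => exact .left a ih

theorem IsShuffle.eq_of_nil_right {u w : List ℕ} (h : IsShuffle u [] w) : w = u := by
  induction u generalizing w with
  | nil => cases h; rfl
  | cons a u ih =>
    cases h with
    | left _ h => rw [ih h]

theorem IsShuffle.append_left (s : List ℕ) {u v w : List ℕ} (h : IsShuffle u v w) :
    IsShuffle (s ++ u) v (s ++ w) := by
  induction s with
  | nil => exact h
  | cons a s ih => exact .left a ih

theorem IsShuffle.append_right (s : List ℕ) {u v w : List ℕ} (h : IsShuffle u v w) :
    IsShuffle u (s ++ v) (s ++ w) :=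
  (h.swap.append_left s).swap

theorem List.lt_append_of_ne_nil {α : Type*} [LinearOrder α] {u v : List α} (hv : v ≠ []) :
    u < u ++ v := by
  induction u with
  | nil => obtain ⟨b, t, rfl⟩ := List.exists_cons_of_ne_nil hv; exact List.nil_lt_cons b t
  | cons a u ih => exact List.cons_lt_cons_iff.2 (Or.inr ⟨rfl, ih⟩)

theorem List.head_flatten_le_of_forall_le_cons {α : Type*} [LinearOrder α] {L : List (List α)}
    {a : α} {u : List α} (h : ∀ t ∈ L, t ≤ a :: u) : ∀ b ∈ L.flatten.head?, b ≤ a := by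
  induction L with
  | nil => simp
  | cons t L ih =>
    cases t with
    | nil => exact ih fun t ht => h t (List.mem_cons_of_mem _ ht)
    | cons b t =>
      intro b' hb'
      obtain rfl : b = b' := by simpa using hb'
      rcases (h _ List.mem_cons_self).lt_or_eq with hlt | heq
      · exact List.head_le_of_lt hlt
      · exact (List.cons_eq_cons.1 heq).1.le

/-- While `w` spells out the run `j, j+1, …`, a letter taken early from `X` or `V` is `< j`,
below the next letter of the run, so it makes `w` smaller. -/
theorem IsShuffle.le_range'_append {d e j : ℕ} {X V B w : List ℕ} (hde : d ≤ e)
    (hw : IsShuffle (List.range' j d ++ X) V w) (hX : ∀ a ∈ X.head?, a < j)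
    (hV : ∀ a ∈ V.head?, a < j) (hB : d = e → ∀ w', IsShuffle X V w' → w' ≤ B) :
    w ≤ List.range' j e ++ B := by
  induction d generalizing e j w with
  | zero =>
    rcases Nat.eq_zero_or_eq_succ_pred e with rfl | he
    · exact hB rfl w (by simpa using hw)
    · rw [he, List.range'_succ, List.cons_append]
      cases hw with
      | nil => exact not_lt.1 (List.not_lt_nil _)
      | left a _ => exact (List.cons_lt_cons_iff.2 (Or.inl (hX a rfl))).le
      | right a _ => exact (List.cons_lt_cons_iff.2 (Or.inl (hV a rfl))).le
  | succ d ih =>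
    obtain ⟨e, rfl⟩ := Nat.exists_eq_add_of_lt hde
    rw [List.range'_succ, List.cons_append] at hw ⊢
    cases hw with
    | left a h =>
      refine List.cons_le_cons j (ih (by omega) h ?_ ?_ ?_)
      · exact fun a ha => (hX a ha).trans (Nat.lt_succ_self j)
      · exact fun a ha => (hV a ha).trans (Nat.lt_succ_self j)
      · exact fun hde' => hB (by omega)
    | right a _ => exact (List.cons_lt_cons_iff.2 (Or.inl (hV a rfl))).le

theorem segWord_eq_cons {k l : ℕ} (h : k ≤ l) :
    segWord k l = k :: List.range' (k + 1) (l - k) := by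
  rw [segWord, show l + 1 - k = l - k + 1 by omega, List.range'_succ]

theorem segWord_append_range' {k l l' : ℕ} (hk : k ≤ l + 1) (hl : l ≤ l') :
    segWord k l ++ List.range' (l + 1) (l' - l) = segWord k l' := by
  have := List.range'_append (s := k) (m := l + 1 - k) (n := l' - l) (step := 1)
  rwa [show k + 1 * (l + 1 - k) = l + 1 by omega,
    show l + 1 - k + (l' - l) = l' + 1 - k by omega] at this

theorem segWord_lt_segWord {k l k' l' : ℕ} (hk : k ≤ l) (hk' : k' ≤ l')
    (h : k < k' ∨ k = k' ∧ l < l') : segWord k l < segWord k' l' := by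
  rcases h with hlt | ⟨rfl, hlt⟩
  · rw [segWord_eq_cons hk, segWord_eq_cons hk']
    exact List.cons_lt_cons_iff.2 (Or.inl hlt)
  · rw [← segWord_append_range' (by omega) hlt.le]
    refine List.lt_append_of_ne_nil ?_
    rw [show l' - l = l' - l - 1 + 1 by omega, List.range'_succ]
    exact List.cons_ne_nil _ _

theorem le_of_segWord_le {k l k' l' : ℕ} (hk : k ≤ l) (hk' : k' ≤ l')
    (h : segWord k l ≤ segWord k' l') : k ≤ k' ∧ (k = k' → l ≤ l') := by
  by_contra hne
  refine not_lt.2 h (segWord_lt_segWord hk' hk ?_)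
  omega

theorem segWord_injOn : Set.InjOn (fun p : ℕ × ℕ => segWord p.1 p.2) {p | p.1 ≤ p.2} := by
  intro p hp q hq h
  have h₁ := le_of_segWord_le hp hq h.le
  have h₂ := le_of_segWord_le hq hp h.ge
  exact Prod.ext (by omega) (by omega)

def IsSeg (s : List ℕ) : Prop := ∃ k l, k ≤ l ∧ s = segWord k l

/-- A segment is the maximal run `k, k+1, …` at the start of a word whose next factor begins
with a letter `≤ k`, so it can be read off the word. -/
theorem segWord_append_inj {k l l' : ℕ} {X Y : List ℕ} (hl : k ≤ l) (hl' : k ≤ l')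
    (hX : ∀ a ∈ X.head?, a ≤ k) (hY : ∀ a ∈ Y.head?, a ≤ k)
    (h : segWord k l ++ X = segWord k l' ++ Y) : l = l' ∧ X = Y := by
  wlog hll : l ≤ l' generalizing l l' X Y
  · obtain ⟨h₁, h₂⟩ := this hl' hl hY hX h.symm (by omega)
    exact ⟨h₁.symm, h₂.symm⟩
  rcases hll.lt_or_eq with hlt | rfl
  · rw [← segWord_append_range' (by omega) hll, List.append_assoc] at h
    have hX' := List.append_cancel_left h
    rw [show l' - l = l' - l - 1 + 1 by omega, List.range'_succ, List.cons_append] at hX'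
    have := hX (l + 1) (by simp [hX'])
    omega
  · exact ⟨rfl, List.append_cancel_left h⟩

/-- `fs` is the canonical factorization of a dominant word: segments in weakly decreasing order. -/
def SortedSegs (fs : List (List ℕ)) : Prop := (∀ s ∈ fs, IsSeg s) ∧ fs.Pairwise (· ≥ ·)

theorem SortedSegs.of_cons {s : List ℕ} {fs : List (List ℕ)} (h : SortedSegs (s :: fs)) :
    SortedSegs fs :=
  ⟨fun t ht => h.1 t (List.mem_cons_of_mem s ht), h.2.of_cons⟩

theorem flatten_eq_cons_of_isSeg {fs : List (List ℕ)} {a : ℕ} {u : List ℕ}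
    (hf : ∀ s ∈ fs, IsSeg s) (h : fs.flatten = a :: u) :
    ∃ l fs', a ≤ l ∧ fs = segWord a l :: fs' ∧ u = List.range' (a + 1) (l - a) ++ fs'.flatten := by
  obtain _ | ⟨s, fs'⟩ := fs
  · simp at h
  obtain ⟨k, l, hkl, rfl⟩ := hf _ List.mem_cons_self
  rw [List.flatten_cons, segWord_eq_cons hkl, List.cons_append, List.cons_eq_cons] at h
  obtain ⟨rfl, rfl⟩ := h
  exact ⟨l, fs', hkl, rfl, rfl⟩

theorem head_flatten_le_of_pairwise_cons {k l : ℕ} (hkl : k ≤ l) {fs : List (List ℕ)}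
    (h : (segWord k l :: fs).Pairwise (· ≥ ·)) : ∀ a ∈ fs.flatten.head?, a ≤ k :=
  List.head_flatten_le_of_forall_le_cons fun _ ht =>
    segWord_eq_cons hkl ▸ List.rel_of_pairwise_cons h ht

theorem SortedSegs.flatten_inj {fs gs : List (List ℕ)} (hf : SortedSegs fs) (hg : SortedSegs gs)
    (h : fs.flatten = gs.flatten) : fs = gs := by
  induction fs generalizing gs with
  | nil =>
    obtain _ | ⟨_, gs'⟩ := gs
    · rfl
    obtain ⟨k, l, hkl, rfl⟩ := hg.1 _ List.mem_cons_self
    simp [segWord_eq_cons hkl] at h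
  | cons s fs ih =>
    obtain ⟨k, l, hkl, rfl⟩ := hf.1 _ List.mem_cons_self
    have hgs := h.symm
    rw [List.flatten_cons, segWord_eq_cons hkl, List.cons_append] at hgs
    obtain ⟨l', gs', hkl', rfl, -⟩ := flatten_eq_cons_of_isSeg hg.1 hgs
    rw [List.flatten_cons, List.flatten_cons] at h
    obtain ⟨rfl, hrest⟩ := segWord_append_inj hkl hkl' (head_flatten_le_of_pairwise_cons hkl hf.2)
      (head_flatten_le_of_pairwise_cons hkl' hg.2) h
    rw [ih hf.of_cons hg.of_cons hrest]

theorem List.forall_le_of_perm_cons {α : Type*} [Preorder α] {m : α} {hs L : List α}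
    (hh : (m :: hs).Pairwise (· ≥ ·)) (hp : (m :: hs).Perm L) : ∀ t ∈ L, t ≤ m := by
  intro t ht
  rcases List.mem_cons.1 (hp.symm.subset ht) with rfl | ht
  exacts [le_rfl, List.rel_of_pairwise_cons hh ht]

theorem isShuffle_flatten_of_perm {hs fs gs : List (List ℕ)} (hf : fs.Pairwise (· ≥ ·))
    (hg : gs.Pairwise (· ≥ ·)) (hh : hs.Pairwise (· ≥ ·)) (hp : hs.Perm (fs ++ gs)) :
    IsShuffle fs.flatten gs.flatten hs.flatten := by
  induction hs generalizing fs gs with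
  | nil =>
    obtain ⟨rfl, rfl⟩ := List.append_eq_nil_iff.1 (List.nil_perm.1 hp)
    exact .nil
  | cons m hs ih =>
    wlog hm : m ∈ fs generalizing fs gs
    · have hmg : m ∈ gs := (List.mem_append.1 (hp.subset List.mem_cons_self)).resolve_left hm
      exact (this hg hf (hp.trans List.perm_append_comm) hmg).swap
    obtain _ | ⟨s, fs'⟩ := fs
    · simp at hm
    have hsm : m ≤ s := by
      rcases List.mem_cons.1 hm with rfl | hm
      exacts [le_rfl, List.rel_of_pairwise_cons hf hm]
    obtain rfl := le_antisymm hsm (List.forall_le_of_perm_cons hh hp s (by simp))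
    rw [List.flatten_cons, List.flatten_cons]
    exact (ih hf.of_cons hg hh.of_cons hp.cons_inv).append_left m

theorem cons_le_flatten_of_perm {m : List ℕ} {hs fs gs : List (List ℕ)} {a : ℕ} {u w : List ℕ}
    (ih : ∀ {fs gs : List (List ℕ)} {w : List ℕ}, SortedSegs fs → SortedSegs gs →
      hs.Perm (fs ++ gs) → IsShuffle fs.flatten gs.flatten w → w ≤ hs.flatten)
    (hf : SortedSegs fs) (hg : SortedSegs gs) (hh : (m :: hs).Pairwise (· ≥ ·))
    (hp : (m :: hs).Perm (fs ++ gs)) (hfa : fs.flatten = a :: u) (hw : IsShuffle u gs.flatten w) :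
    a :: w ≤ (m :: hs).flatten := by
  obtain ⟨l, fs', hal, rfl, rfl⟩ := flatten_eq_cons_of_isSeg hf.1 hfa
  have hmax := List.forall_le_of_perm_cons hh hp
  obtain ⟨k, l', hkl', rfl⟩ : IsSeg m := by
    rcases List.mem_append.1 (hp.subset List.mem_cons_self) with h | h
    exacts [hf.1 _ h, hg.1 _ h]
  obtain ⟨hak, hll'⟩ := le_of_segWord_le hal hkl' (hmax _ (by simp))
  rw [List.flatten_cons, segWord_eq_cons hkl', List.cons_append]
  rcases hak.lt_or_eq with hlt | rfl
  · exact (List.cons_lt_cons_iff.2 (Or.inl hlt)).le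
  refine List.cons_le_cons a (hw.le_range'_append (by have := hll' rfl; omega) ?_ ?_ ?_)
  · exact fun b hb => Nat.lt_succ_of_le (head_flatten_le_of_pairwise_cons hal hf.2 b hb)
  · have hgm : ∀ t ∈ gs, t ≤ a :: List.range' (a + 1) (l' - a) := fun t ht =>
      segWord_eq_cons hkl' ▸ hmax t (List.mem_append_right _ ht)
    exact fun b hb => Nat.lt_succ_of_le (List.head_flatten_le_of_forall_le_cons hgm b hb)
  · intro hd
    obtain rfl : l = l' := by have := hll' rfl; omega
    exact fun w' hw' => ih hf.of_cons hg hp.cons_inv hw'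

theorem shuffle_le_flatten_of_perm {hs fs gs : List (List ℕ)} {w : List ℕ} (hf : SortedSegs fs)
    (hg : SortedSegs gs) (hh : hs.Pairwise (· ≥ ·)) (hp : hs.Perm (fs ++ gs))
    (hw : IsShuffle fs.flatten gs.flatten w) : w ≤ hs.flatten := by
  induction hs generalizing fs gs w with
  | nil =>
    obtain ⟨rfl, rfl⟩ := List.append_eq_nil_iff.1 (List.nil_perm.1 hp)
    cases hw
    exact le_rfl
  | cons m hs ih =>
    have ih' {fs gs : List (List ℕ)} {w : List ℕ} (hf : SortedSegs fs) (hg : SortedSegs gs)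
        (hp : hs.Perm (fs ++ gs)) (hw : IsShuffle fs.flatten gs.flatten w) : w ≤ hs.flatten :=
      ih hf hg hh.of_cons hp hw
    generalize hu : fs.flatten = U at hw
    generalize hv : gs.flatten = V at hw
    cases hw with
    | nil => exact not_lt.1 (List.not_lt_nil _)
    | left a h => exact cons_le_flatten_of_perm ih' hf hg hh hp hu (hv ▸ h)
    | right a h =>
      exact cons_le_flatten_of_perm ih' hg hf hh (hp.trans List.perm_append_comm) hv (hu ▸ h.swap)

theorem isGreatest_shuffle_flatten {hs fs gs : List (List ℕ)} (hf : SortedSegs fs)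
    (hg : SortedSegs gs) (hh : hs.Pairwise (· ≥ ·)) (hp : hs.Perm (fs ++ gs)) :
    IsGreatest {w | IsShuffle fs.flatten gs.flatten w} hs.flatten :=
  ⟨isShuffle_flatten_of_perm hf.2 hg.2 hh hp, fun _ hw => shuffle_le_flatten_of_perm hf hg hh hp hw⟩

theorem List.eq_of_map_eq_of_injOn {α β : Type*} {f : α → β} {s : Set α} (hf : s.InjOn f)
    {l₁ l₂ : List α} (h₁ : ∀ a ∈ l₁, a ∈ s) (h₂ : ∀ a ∈ l₂, a ∈ s) (h : l₁.map f = l₂.map f) :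
    l₁ = l₂ := by
  induction l₁ generalizing l₂ with
  | nil => exact (List.map_eq_nil_iff.1 h.symm).symm
  | cons a l₁ ih =>
    obtain _ | ⟨b, l₂⟩ := l₂
    · simp at h
    rw [List.map_cons, List.map_cons, List.cons_eq_cons] at h
    rw [hf (h₁ a (by simp)) (h₂ b (by simp)) h.1,
      ih (fun a ha => h₁ a (by simp [ha])) (fun a ha => h₂ a (by simp [ha])) h.2]

theorem List.exists_map_eq_of_forall_mem {α β : Type*} {f : α → β} {p : α → Prop} {l : List β}
    (h : ∀ b ∈ l, ∃ a, p a ∧ f a = b) : ∃ l' : List α, (∀ a ∈ l', p a) ∧ l'.map f = l := by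
  induction l with
  | nil => exact ⟨[], by simp, rfl⟩
  | cons b l ih =>
    obtain ⟨a, ha, rfl⟩ := h b List.mem_cons_self
    obtain ⟨l', hl', rfl⟩ := ih fun b hb => h b (List.mem_cons_of_mem _ hb)
    exact ⟨a :: l', by simpa using ⟨ha, hl'⟩, rfl⟩

theorem List.count_flatMap_replicate {α : Type*} [BEq α] [LawfulBEq α] {L : List α} (hL : L.Nodup)
    (c : α → ℕ) (q : α) :
    (L.flatMap fun p => List.replicate (c p) p).count q = if q ∈ L then c q else 0 := by
  induction L with
  | nil => simp
  | cons p L ih =>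
    obtain ⟨hpL, hL⟩ := List.nodup_cons.1 hL
    rw [List.flatMap_cons, List.count_append, List.count_replicate, ih hL]
    by_cases hqp : q = p
    · subst hqp; simp [hpL]
    · simp [hqp, Ne.symm hqp]

theorem mem_segEnum {n : ℕ} {p : ℕ × ℕ} :
    p ∈ segEnum n ↔ 1 ≤ p.1 ∧ p.1 ≤ p.2 ∧ p.2 ≤ n := by
  obtain ⟨k, l⟩ := p
  simp only [segEnum, List.mem_flatten, List.mem_map, List.mem_reverse, List.mem_range'_1]
  constructor
  · rintro ⟨_, ⟨k', hk, rfl⟩, hm⟩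
    simp only [List.mem_map, List.mem_reverse, List.mem_range'_1, Prod.mk.injEq] at hm
    omega
  · rintro ⟨h1, h2, h3⟩
    refine ⟨_, ⟨k, by omega, rfl⟩, ?_⟩
    simp only [List.mem_map, List.mem_reverse, List.mem_range'_1, Prod.mk.injEq]
    exact ⟨l, by omega, by simp⟩

theorem pairwise_segEnum (n : ℕ) :
    (segEnum n).Pairwise fun p q => q.1 < p.1 ∨ q.1 = p.1 ∧ q.2 < p.2 := by
  rw [segEnum, List.pairwise_flatten, List.pairwise_map, List.pairwise_reverse]
  refine ⟨fun l hl => ?_, (List.pairwise_lt_range' (s := 1) (n := n)).imp fun hkk' x hx y hy => ?_⟩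
  · obtain ⟨k, -, rfl⟩ := List.mem_map.1 hl
    rw [List.pairwise_map, List.pairwise_reverse]
    exact (List.pairwise_lt_range' (s := k)).imp fun h => Or.inr ⟨rfl, h⟩
  · obtain ⟨_, -, rfl⟩ := List.mem_map.1 hx
    obtain ⟨_, -, rfl⟩ := List.mem_map.1 hy
    exact Or.inl hkk'

theorem pairwise_segWord_segEnum (n : ℕ) :
    ((segEnum n).map fun p => segWord p.1 p.2).Pairwise (· > ·) := by
  refine List.pairwise_map.2 ((pairwise_segEnum n).imp_of_mem fun hp hq hpq => ?_)
  exact segWord_lt_segWord (mem_segEnum.1 hq).2.1 (mem_segEnum.1 hp).2.1 hpq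

theorem nodup_segEnum (n : ℕ) : (segEnum n).Nodup :=
  (pairwise_segWord_segEnum n).nodup.of_map _

def segPairs (n : ℕ) (c : ℕ × ℕ → ℕ) : List (ℕ × ℕ) :=
  (segEnum n).flatMap fun p => List.replicate (c p) p

def segFactors (n : ℕ) (c : ℕ × ℕ → ℕ) : List (List ℕ) :=
  (segPairs n c).map fun p => segWord p.1 p.2

theorem segFactors_eq_flatMap (n : ℕ) (c : ℕ × ℕ → ℕ) :
    segFactors n c = (segEnum n).flatMap fun p => List.replicate (c p) (segWord p.1 p.2) := by
  simp [segFactors, segPairs, List.map_flatMap]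

theorem flatten_segFactors (n : ℕ) (c : ℕ × ℕ → ℕ) : (segFactors n c).flatten = buildWord n c := by
  simp [segFactors_eq_flatMap, buildWord, List.flatMap, List.flatten_flatten, Function.comp_def]

theorem mem_segEnum_of_mem_segPairs {n : ℕ} {c : ℕ × ℕ → ℕ} {p : ℕ × ℕ} (h : p ∈ segPairs n c) :
    p ∈ segEnum n := by
  obtain ⟨q, hq, hp⟩ := List.mem_flatMap.1 h
  rwa [List.eq_of_mem_replicate hp]

theorem isSegment_of_mem_segFactors {n : ℕ} {c : ℕ × ℕ → ℕ} {s : List ℕ}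
    (h : s ∈ segFactors n c) : IsSegment n s := by
  obtain ⟨p, hp, rfl⟩ := List.mem_map.1 h
  obtain ⟨h1, h2, h3⟩ := mem_segEnum.1 (mem_segEnum_of_mem_segPairs hp)
  exact ⟨p.1, p.2, h1, h2, h3, rfl⟩

theorem IsSegment.isSeg {n : ℕ} {s : List ℕ} (h : IsSegment n s) : IsSeg s := by
  obtain ⟨k, l, -, hkl, -, rfl⟩ := h
  exact ⟨k, l, hkl, rfl⟩

theorem sortedSegs_segFactors (n : ℕ) (c : ℕ × ℕ → ℕ) : SortedSegs (segFactors n c) := by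
  refine ⟨fun s hs => (isSegment_of_mem_segFactors hs).isSeg, ?_⟩
  rw [segFactors_eq_flatMap, List.pairwise_flatMap]
  refine ⟨fun p _ => List.pairwise_replicate.2 (Or.inr le_rfl), ?_⟩
  refine (List.pairwise_map.1 (pairwise_segWord_segEnum n)).imp fun hpq x hx y hy => ?_
  rw [List.eq_of_mem_replicate hx, List.eq_of_mem_replicate hy]
  exact hpq.le

theorem count_segPairs (n : ℕ) (c : ℕ × ℕ → ℕ) (q : ℕ × ℕ) :
    (segPairs n c).count q = if q ∈ segEnum n then c q else 0 :=
  List.count_flatMap_replicate (nodup_segEnum n) c q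

theorem count_segPairs_of_suppValid {n : ℕ} {c : ℕ × ℕ → ℕ} (hc : SuppValid n c) (q : ℕ × ℕ) :
    (segPairs n c).count q = c q := by
  rw [count_segPairs]
  split_ifs with hq
  · rfl
  · by_contra h
    exact hq (mem_segEnum.2 (hc q (Ne.symm h)))

theorem segPairs_add_perm (n : ℕ) (c c' : ℕ × ℕ → ℕ) :
    (segPairs n fun p => c p + c' p).Perm (segPairs n c ++ segPairs n c') := by
  refine List.perm_iff_count.2 fun q => ?_
  rw [List.count_append, count_segPairs, count_segPairs, count_segPairs]
  split_ifs <;> rfl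

theorem isGreatest_shuffle_buildWord (n : ℕ) (c c' : ℕ × ℕ → ℕ) :
    IsGreatest {w | IsShuffle (buildWord n c) (buildWord n c') w}
      (buildWord n fun p => c p + c' p) := by
  simp only [← flatten_segFactors]
  refine isGreatest_shuffle_flatten (sortedSegs_segFactors n c) (sortedSegs_segFactors n c')
    (sortedSegs_segFactors n _).2 ?_
  rw [segFactors, segFactors, segFactors, ← List.map_append]
  exact (segPairs_add_perm n c c').map _

theorem isDominant_buildWord (n : ℕ) (c : ℕ × ℕ → ℕ) : IsDominant n (buildWord n c) :=
  ⟨segFactors n c, List.isChain_iff_pairwise.2 (sortedSegs_segFactors n c).2,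
    fun _ => isSegment_of_mem_segFactors, flatten_segFactors n c⟩

theorem buildWord_inj {n : ℕ} {c c' : ℕ × ℕ → ℕ} (hc : SuppValid n c) (hc' : SuppValid n c')
    (h : buildWord n c = buildWord n c') : c = c' := by
  have hfac : segFactors n c = segFactors n c' :=
    (sortedSegs_segFactors n c).flatten_inj (sortedSegs_segFactors n c')
      (by rw [flatten_segFactors, flatten_segFactors, h])
  have hvalid {c : ℕ × ℕ → ℕ} (p) (hp : p ∈ segPairs n c) : p ∈ {p : ℕ × ℕ | p.1 ≤ p.2} :=
    (mem_segEnum.1 (mem_segEnum_of_mem_segPairs hp)).2.1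
  have hpairs : segPairs n c = segPairs n c' :=
    List.eq_of_map_eq_of_injOn segWord_injOn hvalid hvalid hfac
  funext q
  rw [← count_segPairs_of_suppValid hc, ← count_segPairs_of_suppValid hc', hpairs]

theorem exists_buildWord_eq_of_isDominant {n : ℕ} {μ : List ℕ} (h : IsDominant n μ) :
    ∃ c, SuppValid n c ∧ buildWord n c = μ := by
  obtain ⟨fs, hch, hseg, rfl⟩ := h
  obtain ⟨P, hP, rfl⟩ : ∃ P : List (ℕ × ℕ), (∀ p ∈ P, p ∈ segEnum n) ∧
      P.map (fun p => segWord p.1 p.2) = fs := by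
    refine List.exists_map_eq_of_forall_mem fun s hs => ?_
    obtain ⟨k, l, h1, h2, h3, rfl⟩ := hseg s hs
    exact ⟨(k, l), mem_segEnum.2 ⟨h1, h2, h3⟩, rfl⟩
  have hc : SuppValid n fun q => P.count q := fun q hq =>
    mem_segEnum.1 (hP q (List.count_pos_iff.1 (Nat.pos_of_ne_zero hq)))
  have hperm : (segPairs n fun q => P.count q).Perm P :=
    List.perm_iff_count.2 (count_segPairs_of_suppValid hc)
  refine ⟨_, hc, ?_⟩
  rw [← flatten_segFactors, (hperm.map _).eq_of_pairwise' (sortedSegs_segFactors n _).2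
    (List.isChain_iff_pairwise.1 hch)]

theorem length_segEnum (n : ℕ) : (segEnum n).length = n * (n + 1) / 2 := by
  have hlen : (segEnum n).length = ((List.range' 1 n).map fun k => n + 1 - k).sum := by
    simp [segEnum, List.length_flatten, Function.comp_def, List.map_reverse, List.sum_reverse]
  have hrev : ((List.range' 1 n).map fun k => n + 1 - k) = (List.range' 1 n).reverse := by
    rw [List.reverse_range', List.range'_eq_map_range, List.map_map]
    exact List.map_congr_left fun x _ => by simp; omega
  have hsq : n * (n + 1) = n * (n - 1) + 2 * n := by cases n <;> simp; ring
  rw [hlen, hrev, List.sum_reverse, List.sum_range', hsq]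
  omega

theorem buildWord_zero (n : ℕ) : buildWord n (fun _ => 0) = [] := by
  simp [← flatten_segFactors, segFactors, segPairs]

theorem isShuffle_comm {u v w : List ℕ} : IsShuffle u v w ↔ IsShuffle v u w :=
  ⟨IsShuffle.swap, IsShuffle.swap⟩

theorem dominant_words_monoid_iso_general (n : ℕ) :
    -- the greatest shuffle of two dominant words exists and is again dominant
    (∀ μ μ' : List ℕ, IsDominant n μ → IsDominant n μ' →
        ∃ m, IsGreatest {w | IsShuffle μ μ' w} m ∧ IsDominant n m) ∧
    -- commutativity of ⊙
    (∀ μ μ' m : List ℕ,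
        IsGreatest {w | IsShuffle μ μ' w} m ↔ IsGreatest {w | IsShuffle μ' μ w} m) ∧
    -- the empty word is dominant and is the identity for ⊙
    IsDominant n [] ∧
    (∀ μ : List ℕ, IsGreatest {w | IsShuffle μ [] w} μ) ∧
    -- associativity of ⊙
    (∀ μ ν ρ a b c d : List ℕ,
        IsDominant n μ → IsDominant n ν → IsDominant n ρ →
        IsGreatest {w | IsShuffle μ ν w} a → IsGreatest {w | IsShuffle a ρ w} b →
        IsGreatest {w | IsShuffle ν ρ w} c → IsGreatest {w | IsShuffle μ c w} d →
        b = d) ∧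
    -- there are r_n = n(n+1)/2 segments
    (segEnum n).length = n * (n + 1) / 2 ∧
    -- the multiplicity-vector map is a monoid isomorphism onto (ℕ^{r_n}, +),
    -- expressed via its inverse `buildWord`:
    (∀ c : ℕ × ℕ → ℕ, SuppValid n c → IsDominant n (buildWord n c)) ∧
    (∀ c c' : ℕ × ℕ → ℕ, SuppValid n c → SuppValid n c' →
        buildWord n c = buildWord n c' → c = c') ∧
    (∀ μ : List ℕ, IsDominant n μ → ∃ c, SuppValid n c ∧ buildWord n c = μ) ∧
    buildWord n (fun _ => 0) = [] ∧
    (∀ c c' : ℕ × ℕ → ℕ, SuppValid n c → SuppValid n c' →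
        IsGreatest {w | IsShuffle (buildWord n c) (buildWord n c') w}
          (buildWord n (fun p => c p + c' p))) := by
  have hmax := isGreatest_shuffle_buildWord n
  refine ⟨fun μ μ' hμ hμ' => ?_, fun μ μ' m => ?_, ⟨[], List.isChain_nil, by simp, rfl⟩,
    fun μ => ⟨isShuffle_nil_right μ, fun w hw => hw.eq_of_nil_right.le⟩,
    fun μ ν ρ a b c d hμ hν hρ ha hb hc hd => ?_, length_segEnum n,
    fun c _ => isDominant_buildWord n c, fun c c' hc hc' => buildWord_inj hc hc',
    fun μ => exists_buildWord_eq_of_isDominant, buildWord_zero n, fun c c' _ _ => hmax c c'⟩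
  · obtain ⟨c, -, rfl⟩ := exists_buildWord_eq_of_isDominant hμ
    obtain ⟨c', -, rfl⟩ := exists_buildWord_eq_of_isDominant hμ'
    exact ⟨_, hmax c c', isDominant_buildWord n _⟩
  · have : {w | IsShuffle μ μ' w} = {w | IsShuffle μ' μ w} := Set.ext fun _ => isShuffle_comm
    rw [this]
  · obtain ⟨c₁, -, rfl⟩ := exists_buildWord_eq_of_isDominant hμ
    obtain ⟨c₂, -, rfl⟩ := exists_buildWord_eq_of_isDominant hν
    obtain ⟨c₃, -, rfl⟩ := exists_buildWord_eq_of_isDominant hρ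
    obtain rfl := ha.unique (hmax c₁ c₂)
    obtain rfl := hc.unique (hmax c₂ c₃)
    rw [hb.unique (hmax _ c₃), hd.unique (hmax c₁ _)]
    simp only [add_assoc]

/-- The set `M` of dominant words over {1,…,n}, equipped with the product
`μ ⊙ μ' := maxSh (μ, μ')` (the lexicographically greatest shuffle), is a commutative monoid
with identity the empty word, and the multiplicity-vector map is a monoid isomorphism
onto `(ℕ^{r_n}, +)` where `r_n = n(n+1)/2` is the number of segments. -/
theorem dominant_words_monoid_iso (n : ℕ) (hn : 1 ≤ n) :
    -- the greatest shuffle of two dominant words exists and is again dominant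
    (∀ μ μ' : List ℕ, IsDominant n μ → IsDominant n μ' →
        ∃ m, IsGreatest {w | IsShuffle μ μ' w} m ∧ IsDominant n m) ∧
    -- commutativity of ⊙
    (∀ μ μ' m : List ℕ,
        IsGreatest {w | IsShuffle μ μ' w} m ↔ IsGreatest {w | IsShuffle μ' μ w} m) ∧
    -- the empty word is dominant and is the identity for ⊙
    IsDominant n [] ∧
    (∀ μ : List ℕ, IsGreatest {w | IsShuffle μ [] w} μ) ∧
    -- associativity of ⊙
    (∀ μ ν ρ a b c d : List ℕ,
        IsDominant n μ → IsDominant n ν → IsDominant n ρ →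
        IsGreatest {w | IsShuffle μ ν w} a → IsGreatest {w | IsShuffle a ρ w} b →
        IsGreatest {w | IsShuffle ν ρ w} c → IsGreatest {w | IsShuffle μ c w} d →
        b = d) ∧
    -- there are r_n = n(n+1)/2 segments
    (segEnum n).length = n * (n + 1) / 2 ∧
    -- the multiplicity-vector map is a monoid isomorphism onto (ℕ^{r_n}, +),
    -- expressed via its inverse `buildWord`:
    (∀ c : ℕ × ℕ → ℕ, SuppValid n c → IsDominant n (buildWord n c)) ∧
    (∀ c c' : ℕ × ℕ → ℕ, SuppValid n c → SuppValid n c' →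
        buildWord n c = buildWord n c' → c = c') ∧
    (∀ μ : List ℕ, IsDominant n μ → ∃ c, SuppValid n c ∧ buildWord n c = μ) ∧
    buildWord n (fun _ => 0) = [] ∧
    (∀ c c' : ℕ × ℕ → ℕ, SuppValid n c → SuppValid n c' →
        IsGreatest {w | IsShuffle (buildWord n c) (buildWord n c') w}
          (buildWord n (fun p => c p + c' p))) :=
  dominant_words_monoid_iso_general n
end

section
/- Let n ≥ 1 and let μ, μ' be dominant words over {1,…,n}. Let j^(1) > j^(2) > ⋯ > j^(s) be the distinct segments occurring in the canonical factorizations of μ and μ', listed in decreasing lexicographic order, and let m_1,…,m_s and m'_1,…,m'_s be the (possibly zero) multiplicities with which they occur in the canonical factorizations of μ and μ' respectively, so that μ = (j^(1))^{m_1}⋯(j^(s))^{m_s} and μ' = (j^(1))^{m'_1}⋯(j^(s))^{m'_s} as concatenations. Then the lexicographically greatest shuffle of μ and μ' is the concatenation (j^(1))^{m_1+m'_1}(j^(2))^{m_2+m'_2}⋯(j^(s))^{m_s+m'_s}. -/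
/-- Concatenation `(j^(1))^{m_1} (j^(2))^{m_2} ⋯ (j^(s))^{m_s}` of the words of `js`,
each repeated with the corresponding multiplicity from `ms`. -/
def glueWord (js : List (List ℕ)) (ms : List ℕ) : List ℕ :=
  ((js.zip ms).map fun p => (List.replicate p.2 p.1).flatten).flatten

/-!
Segments compare lexicographically by first letter and then by length, so every segment of `μ`
or `μ'` starts with a letter at most `k`, where `s = ⟨k,l⟩` is the largest one. A shuffle `w` can
therefore only reach the prefix `s` by copying one whole occurrence of `s` from the front of `μ`
or of `μ'`: while a segment `⟨k,b⟩` is being copied from one word, the other word offers only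
letters `≤ k`, which are too small, and a shorter segment `⟨k,b⟩` is followed by a letter `≤ k`
where `s` has `b + 1`. Hence either `w < s ++ z` for every `z`, or `w = s ++ w'` with `w'` a
shuffle of what is left, and induction on the decreasingly sorted list of all segments concludes.
Below, the segment `⟨i, i + m⟩` is written `range' i (m + 1)`.
-/

open List

namespace IsShuffle

variable {u v w u' v' w' : List ℕ}

theorem symm (h : IsShuffle u v w) : IsShuffle v u w := by
  induction h with
  | nil => exact .nil
  | left a _ ih => exact .right a ih
  | right a _ ih => exact .left a ih

theorem append (h : IsShuffle u v w) (h' : IsShuffle u' v' w') :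
    IsShuffle (u ++ u') (v ++ v') (w ++ w') := by
  induction h with
  | nil => exact h'
  | left a _ ih => exact .left a ih
  | right a _ ih => exact .right a ih

theorem nil_left : ∀ {v : List ℕ}, IsShuffle [] v v
  | [] => .nil
  | _ :: _ => .right _ nil_left

theorem nil_right : ∀ {u : List ℕ}, IsShuffle u [] u
  | [] => .nil
  | _ :: _ => .left _ nil_right

theorem append_self (u v : List ℕ) : IsShuffle u v (u ++ v) := by
  simpa using nil_right.append (nil_left (v := v))

theorem head?_eq_or (h : IsShuffle u v w) : w.head? = u.head? ∨ w.head? = v.head? := by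
  cases h <;> simp

theorem eq_range'_append_or_lt {i n : ℕ} (h : IsShuffle (range' i n ++ u) v w)
    (hv : ∀ a ∈ v.head?, a < i) :
    (∃ w', w = range' i n ++ w' ∧ IsShuffle u v w') ∨ ∀ z, w < range' i n ++ z := by
  induction n generalizing i w with
  | zero => exact .inl ⟨w, rfl, h⟩
  | succ n ih =>
    rw [range'_succ, cons_append] at h
    cases h with
    | left _ h =>
      rcases ih h (fun a ha => Nat.lt_succ_of_lt (hv a ha)) with ⟨w', rfl, h'⟩ | hlt
      · exact .inl ⟨w', rfl, h'⟩
      · exact .inr fun z => Lex.cons (hlt z)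
    | right a _ => exact .inr fun _ => Lex.rel (hv a rfl)

end IsShuffle

theorem List.lt_cons_of_head?_lt {α : Type*} [LinearOrder α] {w : List α} {c : α}
    (hw : ∀ a ∈ w.head?, a < c) (z : List α) : w < c :: z := by
  cases w with
  | nil => exact Lex.nil
  | cons a _ => exact Lex.rel (hw a rfl)

theorem List.append_le_append_left {α : Type*} [LinearOrder α] {s u v : List α} (h : u ≤ v) :
    s ++ u ≤ s ++ v := by
  rcases h.lt_or_eq with h | rfl
  · exact le_of_lt (Lex.append_left _ h s)
  · exact le_rfl

theorem List.lt_or_eq_and_le_of_range'_le_range' {a m k n : ℕ}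
    (h : range' a (m + 1) ≤ range' k (n + 1)) : a < k ∨ a = k ∧ m ≤ n := by
  by_contra! hcon
  rcases hcon.1.lt_or_eq with hka | rfl
  · exact not_lt_of_ge h (Lex.rel hka)
  · obtain ⟨d, rfl⟩ : ∃ d, m = n + 1 + d := ⟨m - n - 1, by omega⟩
    have hsplit : range' k (n + 1 + d + 1) = range' k (n + 1) ++ range' (k + (n + 1)) (d + 1) := by
      rw [range'_append_1]; rfl
    rw [hsplit] at h
    have hlt : range' k (n + 1) ++ [] < range' k (n + 1) ++ range' (k + (n + 1)) (d + 1) :=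
      Lex.append_left _ (nil_lt_cons _ _) _
    exact not_lt_of_ge h (by rwa [append_nil] at hlt)

section Segments

variable {k n : ℕ} {F G : List (List ℕ)}

theorem head?_flatten_le (hF : ∀ x ∈ F, ∃ i m, x = range' i (m + 1))
    (hle : ∀ x ∈ F, x ≤ range' k (n + 1)) : ∀ a ∈ F.flatten.head?, a ≤ k := by
  cases F with
  | nil => simp
  | cons f F =>
    obtain ⟨a, m, rfl⟩ := hF f mem_cons_self
    intro b hb
    simp only [flatten_cons, range'_succ, cons_append, head?_cons, Option.mem_some_iff] at hb
    subst hb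
    rcases lt_or_eq_and_le_of_range'_le_range' (hle _ mem_cons_self) with h | ⟨rfl, -⟩
    exacts [h.le, le_rfl]

theorem IsShuffle.peel_segment_left {a : ℕ} {u w : List ℕ}
    (hF : ∀ x ∈ F, ∃ i m, x = range' i (m + 1)) (hFle : ∀ x ∈ F, x ≤ range' k (n + 1))
    (hG : ∀ b ∈ G.flatten.head?, b ≤ k) (hu : F.flatten = a :: u)
    (hw : IsShuffle u G.flatten w) :
    (∀ z, a :: w < range' k (n + 1) ++ z) ∨
      ∃ F' w', F = range' k (n + 1) :: F' ∧ a :: w = range' k (n + 1) ++ w' ∧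
        IsShuffle F'.flatten G.flatten w' := by
  obtain _ | ⟨f, F'⟩ := F
  · simp at hu
  obtain ⟨b, m, rfl⟩ := hF _ mem_cons_self
  rw [flatten_cons, range'_succ, cons_append, cons.injEq] at hu
  obtain ⟨rfl, rfl⟩ := hu
  have hF' : ∀ c ∈ F'.flatten.head?, c ≤ k :=
    head?_flatten_le (fun x hx => hF x (mem_cons_of_mem _ hx))
      (fun x hx => hFle x (mem_cons_of_mem _ hx))
  rcases lt_or_eq_and_le_of_range'_le_range' (hFle _ mem_cons_self) with hbk | ⟨rfl, hmn⟩
  · exact .inl fun _ => Lex.rel hbk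
  obtain ⟨d, rfl⟩ : ∃ d, n = m + d := ⟨n - m, by omega⟩
  have hsplit : range' b (m + d + 1) = b :: (range' (b + 1) m ++ range' (b + 1 + m) d) := by
    rw [range'_append_1]; rfl
  rcases hw.eq_range'_append_or_lt fun c hc => Nat.lt_succ_of_le (hG c hc)
    with ⟨w', rfl, hw'⟩ | hlt
  · cases d with
    | zero => exact .inr ⟨F', w', rfl, by simp [range'_succ], hw'⟩
    | succ d =>
      have hhead : ∀ c ∈ w'.head?, c < b + 1 + m := fun c hc => by
        rcases hw'.head?_eq_or with h | h <;> rw [h] at hc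
        · exact Nat.lt_of_le_of_lt (hF' c hc) (by omega)
        · exact Nat.lt_of_le_of_lt (hG c hc) (by omega)
      refine .inl fun z => ?_
      rw [hsplit, range'_succ, cons_append, append_assoc, cons_append]
      exact Lex.cons (Lex.append_left _ (lt_cons_of_head?_lt hhead _) _)
  · refine .inl fun z => ?_
    rw [hsplit, cons_append, append_assoc]
    exact Lex.cons (hlt _)

theorem IsShuffle.peel_segment {w : List ℕ} (hseg : ∀ x ∈ F ++ G, ∃ i m, x = range' i (m + 1))
    (hle : ∀ x ∈ F ++ G, x ≤ range' k (n + 1)) (hw : IsShuffle F.flatten G.flatten w) :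
    (∀ z, w < range' k (n + 1) ++ z) ∨ ∃ w', w = range' k (n + 1) ++ w' ∧
      ((∃ F', F = range' k (n + 1) :: F' ∧ IsShuffle F'.flatten G.flatten w') ∨
        (∃ G', G = range' k (n + 1) :: G' ∧ IsShuffle F.flatten G'.flatten w')) := by
  have hsegF := fun x hx => hseg x (mem_append_left G hx)
  have hsegG := fun x hx => hseg x (mem_append_right F hx)
  have hleF := fun x hx => hle x (mem_append_left G hx)
  have hleG := fun x hx => hle x (mem_append_right F hx)
  generalize hU : F.flatten = U at hw
  generalize hV : G.flatten = V at hw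
  cases hw with
  | nil => exact .inl fun _ => by rw [range'_succ]; exact Lex.nil
  | left a hw =>
    subst hV
    rcases peel_segment_left hsegF hleF (head?_flatten_le hsegG hleG) hU hw
      with hlt | ⟨F', w', rfl, hw, hw'⟩
    · exact .inl hlt
    · exact .inr ⟨w', hw, .inl ⟨F', rfl, hw'⟩⟩
  | right a hw =>
    subst hU
    rcases peel_segment_left hsegG hleG (head?_flatten_le hsegF hleF) hV hw.symm
      with hlt | ⟨G', w', rfl, hw, hw'⟩
    · exact .inl hlt
    · exact .inr ⟨w', hw, .inr ⟨G', rfl, hw'.symm⟩⟩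

end Segments

theorem IsShuffle.le_flatten_of_perm {F G H : List (List ℕ)} {w : List ℕ}
    (hseg : ∀ x ∈ F ++ G, ∃ i m, x = range' i (m + 1)) (hH : H.Pairwise (· ≥ ·))
    (hp : H ~ F ++ G) (hw : IsShuffle F.flatten G.flatten w) : w ≤ H.flatten := by
  induction H generalizing F G w with
  | nil =>
    obtain ⟨rfl, rfl⟩ := append_eq_nil_iff.1 (nil_perm.1 hp)
    cases hw
    exact le_rfl
  | cons s H ih =>
    obtain ⟨k, n, rfl⟩ := hseg s (hp.subset mem_cons_self)
    have hle : ∀ x ∈ F ++ G, x ≤ range' k (n + 1) := fun x hx => by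
      rcases mem_cons.1 (hp.symm.subset hx) with rfl | hx
      · exact le_rfl
      · exact rel_of_pairwise_cons hH hx
    rw [flatten_cons]
    rcases hw.peel_segment hseg hle with hlt | ⟨w', rfl, ⟨F', rfl, hw'⟩ | ⟨G', rfl, hw'⟩⟩
    · exact le_of_lt (hlt _)
    · refine append_le_append_left (ih (fun x hx => hseg x ?_) hH.of_cons ?_ hw')
      · exact mem_append.2 ((mem_append.1 hx).imp (mem_cons_of_mem _) id)
      · simpa using hp
    · refine append_le_append_left (ih (fun x hx => hseg x ?_) hH.of_cons ?_ hw')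
      · exact mem_append.2 ((mem_append.1 hx).imp id (mem_cons_of_mem _))
      · simpa using hp.trans perm_middle

def glueFactors (js : List (List ℕ)) (ms : List ℕ) : List (List ℕ) :=
  (js.zip ms).flatMap fun p => replicate p.2 p.1

theorem glueWord_eq_flatten_glueFactors (js : List (List ℕ)) (ms : List ℕ) :
    glueWord js ms = (glueFactors js ms).flatten := by
  rw [glueWord, glueFactors, flatMap_def, flatten_flatten, map_map]; rfl

@[simp]
theorem glueFactors_cons_cons (j : List ℕ) (js : List (List ℕ)) (m : ℕ) (ms : List ℕ) :
    glueFactors (j :: js) (m :: ms) = replicate m j ++ glueFactors js ms := by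
  simp [glueFactors]

theorem mem_of_mem_glueFactors {js : List (List ℕ)} {ms : List ℕ} {x : List ℕ}
    (hx : x ∈ glueFactors js ms) : x ∈ js := by
  obtain ⟨p, hp, hx⟩ := mem_flatMap.1 hx
  rw [eq_of_mem_replicate hx]
  exact of_mem_zip hp |>.1

theorem pairwise_glueFactors {js : List (List ℕ)} (hjs : js.Pairwise (· > ·)) (ms : List ℕ) :
    (glueFactors js ms).Pairwise (· ≥ ·) := by
  induction js generalizing ms with
  | nil => simp [glueFactors]
  | cons j js ih =>
    cases ms with
    | nil => simp [glueFactors]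
    | cons m ms =>
      rw [glueFactors_cons_cons, pairwise_append]
      refine ⟨pairwise_replicate.2 (.inr le_rfl), ih hjs.of_cons ms, fun x hx y hy => ?_⟩
      rw [eq_of_mem_replicate hx]
      exact le_of_lt (rel_of_pairwise_cons hjs (mem_of_mem_glueFactors hy))

theorem glueFactors_zipWith_add_perm (js : List (List ℕ)) {ms ms' : List ℕ}
    (h : ms.length = ms'.length) :
    glueFactors js (zipWith (· + ·) ms ms') ~ glueFactors js ms ++ glueFactors js ms' := by
  induction js generalizing ms ms' with
  | nil => simp [glueFactors]
  | cons j js ih =>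
    match ms, ms', h with
    | [], [], _ => simp [glueFactors]
    | m :: ms, m' :: ms', h =>
      rw [zipWith_cons_cons, glueFactors_cons_cons, glueFactors_cons_cons, glueFactors_cons_cons,
        replicate_add, append_assoc, append_assoc]
      exact ((ih (by simpa using h)).append_left _).trans (perm_append_comm_assoc _ _ _)
        |>.append_left _

theorem isShuffle_glueWord_zipWith_add (js : List (List ℕ)) {ms ms' : List ℕ}
    (h : ms.length = ms'.length) :
    IsShuffle (glueWord js ms) (glueWord js ms') (glueWord js (zipWith (· + ·) ms ms')) := by
  simp only [glueWord_eq_flatten_glueFactors]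
  induction js generalizing ms ms' with
  | nil => exact .nil
  | cons j js ih =>
    match ms, ms', h with
    | [], [], _ => exact .nil
    | m :: ms, m' :: ms', h =>
      simp only [zipWith_cons_cons, glueFactors_cons_cons, replicate_add, flatten_append]
      exact (IsShuffle.append_self _ _).append (ih (by simpa using h))

theorem maxShuffle_of_dominant_words_general (n : ℕ)
    (js : List (List ℕ)) (ms ms' : List ℕ)
    (hseg : ∀ w ∈ js, IsSegment n w)
    (hdec : List.Chain' (· > ·) js)
    (hlen : ms.length = js.length) (hlen' : ms'.length = js.length) :
    IsGreatest {w | IsShuffle (glueWord js ms) (glueWord js ms') w}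
      (glueWord js (List.zipWith (· + ·) ms ms')) := by
  have hms : ms.length = ms'.length := hlen.trans hlen'.symm
  refine ⟨isShuffle_glueWord_zipWith_add js hms, fun w hw => ?_⟩
  rw [Set.mem_ofPred_eq, glueWord_eq_flatten_glueFactors, glueWord_eq_flatten_glueFactors] at hw
  rw [glueWord_eq_flatten_glueFactors]
  refine hw.le_flatten_of_perm (fun x hx => ?_)
    (pairwise_glueFactors (isChain_iff_pairwise.1 hdec) _) (glueFactors_zipWith_add_perm js hms)
  obtain ⟨k, l, -, hkl, -, rfl⟩ :=
    hseg x (by rcases mem_append.1 hx with hx | hx <;> exact mem_of_mem_glueFactors hx)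
  exact ⟨k, l - k, by rw [segWord]; congr 1; omega⟩

/-- Let μ, μ' be dominant words whose canonical factorizations use the distinct segments
`j^(1) > ⋯ > j^(s)` with multiplicities `m_1,…,m_s` and `m'_1,…,m'_s` respectively.
Then the lexicographically greatest shuffle of μ and μ' is the concatenation
`(j^(1))^{m_1+m'_1} ⋯ (j^(s))^{m_s+m'_s}`. -/
theorem maxShuffle_of_dominant_words (n : ℕ) (hn : 1 ≤ n)
    (js : List (List ℕ)) (ms ms' : List ℕ)
    (hseg : ∀ w ∈ js, IsSegment n w)
    (hdec : List.Chain' (· > ·) js)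
    (hlen : ms.length = js.length) (hlen' : ms'.length = js.length) :
    IsGreatest {w | IsShuffle (glueWord js ms) (glueWord js ms') w}
      (glueWord js (List.zipWith (· + ·) ms ms')) :=
  maxShuffle_of_dominant_words_general n js ms ms' hseg hdec hlen hlen'
end

section
/- Let n ≥ 1 and let μ, μ' be dominant words over {1,…,n} with canonical factorizations μ = i^(1) i^(2) ⋯ i^(r) and μ' = i'^(1) i'^(2) ⋯ i'^(r') (Lyndon factors in weakly decreasing lexicographic order). If the last Lyndon factor of μ is lexicographically greater than or equal to the first Lyndon factor of μ', i.e. i^(r) ≥ i'^(1), then the lexicographically greatest shuffle of μ and μ' equals the concatenation μμ'. -/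
/-!
During a shuffle of `F.flatten` and `G.flatten`, each letter taken is the first letter `a` of a
factor `a :: s`, and what is left of that factor is again a segment, so both remaining lists stay
decreasing lists of segments. By induction on the shuffle it is therefore bounded by the
concatenation of `F.merge G`, the decreasing rearrangement of all factors. Taking `a` from
`a :: s` loses nothing when `a :: s` is the largest factor; otherwise the largest factor starts
with a larger letter, or it is a longer segment `a :: s ++ c :: r`, and after `a :: s` the bound
for the shuffle continues with the letter `a` where `F.merge G` has `c > a`. When the last factor
of `F` dominates the first factor of `G`, the merge is just `F ++ G`.
-/

theorem IsShuffle.nil_left_s2 : ∀ v : List ℕ, IsShuffle [] v v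
  | [] => .nil
  | a :: v => .right a (nil_left_s2 v)

theorem IsShuffle.append_s2 : ∀ u v : List ℕ, IsShuffle u v (u ++ v)
  | [], v => nil_left_s2 v
  | a :: u, v => .left a (append_s2 u v)

namespace List

variable {α : Type*}

theorem exists_eq_cons_cons_of_flatten_eq_cons {F : List (List α)} {a : α} {u : List α}
    (hF : ∀ s ∈ F, s ≠ []) (h : F.flatten = a :: u) :
    ∃ s F₀, F = (a :: s) :: F₀ ∧ u = s ++ F₀.flatten := by
  rcases F with _ | ⟨_ | ⟨b, s⟩, F₀⟩
  · simp at h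
  · exact absurd rfl (hF [] mem_cons_self)
  · simp only [flatten_cons, cons_append, cons.injEq] at h
    obtain ⟨rfl, rfl⟩ := h
    exact ⟨s, F₀, rfl, rfl⟩

variable [LinearOrder α]

theorem head_le_of_cons_le_cons {a b : α} {u v : List α} (h : b :: u ≤ a :: v) : b ≤ a := by
  rcases h.lt_or_eq with h | h
  · exact head_le_of_lt h
  · exact (cons.inj h).1.le

theorem cons_merge_ge_of_forall_head_le {x : α} {F G : List α} (h : ∀ y ∈ G.head?, y ≤ x) :
    (x :: F).merge G (· ≥ ·) = x :: F.merge G (· ≥ ·) := by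
  cases G with
  | nil => simp
  | cons y G => rw [cons_merge_cons, if_pos (by simpa using h y rfl)]

theorem merge_cons_ge_of_forall_head_lt {x : α} {F G : List α} (h : ∀ y ∈ F.head?, y < x) :
    F.merge (x :: G) (· ≥ ·) = x :: F.merge G (· ≥ ·) := by
  cases F with
  | nil => simp
  | cons y F => rw [cons_merge_cons, if_neg (by simpa using h y rfl)]

theorem merge_ge_comm {F G : List α} (hF : F.SortedGE) (hG : G.SortedGE) :
    F.merge G (· ≥ ·) = G.merge F (· ≥ ·) :=
  Perm.eq_of_pairwise' (hF.pairwise.merge hG.pairwise) (hG.pairwise.merge hF.pairwise)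
    ((merge_perm_append _).trans (perm_append_comm.trans (merge_perm_append _).symm))

end List

def IsNatSegment (s : List ℕ) : Prop := ∃ k m : ℕ, s = List.range' k (m + 1)

theorem IsSegment.isNatSegment {n : ℕ} {w : List ℕ} (h : IsSegment n w) : IsNatSegment w := by
  obtain ⟨k, l, -, hkl, -, rfl⟩ := h
  exact ⟨k, l - k, by rw [segWord, show l + 1 - k = l - k + 1 by omega]⟩

namespace IsNatSegment

theorem ne_nil {s : List ℕ} (h : IsNatSegment s) : s ≠ [] := by
  obtain ⟨k, m, rfl⟩ := h
  simp

theorem of_cons_cons {a c : ℕ} {s : List ℕ} (h : IsNatSegment (a :: c :: s)) :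
    c = a + 1 ∧ IsNatSegment (c :: s) := by
  obtain ⟨k, _ | m, h⟩ := h
  · simp at h
  simp only [List.range'_succ, List.cons.injEq] at h
  obtain ⟨rfl, rfl, rfl⟩ := h
  exact ⟨rfl, _, m, by rw [List.range'_succ]⟩

theorem exists_append_of_lt {a : ℕ} {s t : List ℕ} (hs : IsNatSegment (a :: s))
    (ht : IsNatSegment (a :: t)) (h : s < t) : ∃ c r, a < c ∧ t = s ++ c :: r := by
  obtain ⟨k, m, hs⟩ := hs
  obtain ⟨k', m', ht⟩ := ht
  simp only [List.range'_succ, List.cons.injEq] at hs ht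
  obtain ⟨rfl, rfl⟩ := hs
  obtain ⟨rfl, rfl⟩ := ht
  rcases le_or_gt m' m with hm | hm
  · rw [← Nat.add_sub_cancel' hm, ← List.range'_append] at h
    exact absurd h (List.prefix_append _ _).le
  · refine ⟨a + 1 + m, List.range' (a + 1 + m + 1) (m' - m - 1), by omega, ?_⟩
    rw [show m' = m + (m' - m - 1 + 1) by omega, ← List.range'_append, List.range'_succ]
    simp

end IsNatSegment

def dropHead {α : Type*} : List (List α) → List (List α)
  | (_ :: b :: s) :: F => (b :: s) :: F
  | _ :: F => F
  | [] => []

theorem flatten_dropHead_cons {α : Type*} (a : α) (s : List α) (F : List (List α)) :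
    (dropHead ((a :: s) :: F)).flatten = s ++ F.flatten := by
  rcases s with _ | ⟨b, s⟩ <;> simp [dropHead]

def IsDominantFactorization (F : List (List ℕ)) : Prop :=
  (∀ s ∈ F, IsNatSegment s) ∧ F.SortedGE

theorem IsDominantFactorization.dropHead {a : ℕ} {s : List ℕ} {F : List (List ℕ)}
    (h : IsDominantFactorization ((a :: s) :: F)) :
    IsDominantFactorization (dropHead ((a :: s) :: F)) := by
  obtain ⟨hseg, hsorted⟩ := h
  rw [List.sortedGE_iff_pairwise, List.pairwise_cons] at hsorted
  rcases s with _ | ⟨c, s⟩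
  · exact ⟨fun t ht => hseg t (List.mem_cons_of_mem _ ht), hsorted.2.sortedGE⟩
  obtain ⟨rfl, hcs⟩ := (hseg _ List.mem_cons_self).of_cons_cons
  refine ⟨?_, (List.pairwise_cons.mpr ⟨fun t ht => ?_, hsorted.2⟩).sortedGE⟩
  · exact List.forall_mem_cons.mpr ⟨hcs, fun t ht => hseg t (List.mem_cons_of_mem _ ht)⟩
  · -- every later factor starts with a letter `≤ a`, hence is below `(a + 1) :: s`
    obtain ⟨b, u, rfl⟩ := List.exists_cons_of_ne_nil (hseg _ (List.mem_cons_of_mem _ ht)).ne_nil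
    have hba := List.head_le_of_cons_le_cons (hsorted.1 _ ht)
    exact (List.cons_lt_cons_iff.mpr (Or.inl (Nat.lt_succ_of_le hba))).le

theorem flatten_merge_dropHead {a b : ℕ} {s t : List ℕ} {F G : List (List ℕ)}
    (hs : IsNatSegment (a :: s)) (hba : b ≤ a) :
    ((dropHead ((a :: s) :: F)).merge ((b :: t) :: G) (· ≥ ·)).flatten =
      s ++ (F.merge ((b :: t) :: G) (· ≥ ·)).flatten := by
  rcases s with _ | ⟨c, s⟩
  · rfl
  have hc := hs.of_cons_cons.1
  rw [dropHead, List.cons_merge_ge_of_forall_head_le, List.flatten_cons]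
  simpa using (List.cons_lt_cons_iff.mpr (Or.inl (by omega : b < c))).le

theorem cons_flatten_merge_dropHead_le {a : ℕ} {s : List ℕ} {F G : List (List ℕ)}
    (hs : IsNatSegment (a :: s)) (hF : ((a :: s) :: F).SortedGE)
    (hG : ∀ t ∈ G, IsNatSegment t) :
    a :: ((dropHead ((a :: s) :: F)).merge G (· ≥ ·)).flatten ≤
      (((a :: s) :: F).merge G (· ≥ ·)).flatten := by
  rcases G with _ | ⟨t, G⟩
  · simp [flatten_dropHead_cons]
  obtain ⟨b, t, rfl⟩ := List.exists_cons_of_ne_nil (hG _ List.mem_cons_self).ne_nil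
  rcases le_or_gt (b :: t) (a :: s) with hle | hlt
  · rw [flatten_merge_dropHead hs (List.head_le_of_cons_le_cons hle),
      List.cons_merge_ge_of_forall_head_le (by simpa using hle)]
    simp
  rw [List.cons_merge_cons, if_neg (by simpa using hlt), List.flatten_cons]
  rcases List.cons_lt_cons_iff.mp hlt with hab | ⟨rfl, hst⟩
  · exact (List.cons_lt_cons_iff.mpr (Or.inl hab)).le
  -- `b :: t` is the longer segment `a :: s ++ c :: r`: the bound continues with `c > a`
  obtain ⟨c, r, hac, rfl⟩ := hs.exists_append_of_lt (hG _ List.mem_cons_self) hst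
  have hFt : ∀ f ∈ F.head?, f < a :: (s ++ c :: r) := fun f hf =>
    lt_of_le_of_lt (List.rel_of_pairwise_cons hF.pairwise (List.mem_of_mem_head? hf)) hlt
  rw [flatten_merge_dropHead hs le_rfl, List.merge_cons_ge_of_forall_head_lt hFt]
  simp only [List.flatten_cons, List.cons_append, List.append_assoc]
  exact List.cons_le_cons a (List.append_left_lt (List.cons_lt_cons_iff.mpr (Or.inl hac))).le

theorem le_flatten_merge_of_isShuffle {w : List ℕ} :
    ∀ {F G : List (List ℕ)}, IsDominantFactorization F → IsDominantFactorization G →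
      IsShuffle F.flatten G.flatten w → w ≤ (F.merge G (· ≥ ·)).flatten := by
  induction w with
  | nil => exact fun _ _ _ => not_lt.mp (List.not_lt_nil _)
  | cons a w ih =>
    intro F G hF hG h
    generalize hu : F.flatten = u at h
    generalize hv : G.flatten = v at h
    cases h with
    | left _ h =>
      obtain ⟨s, F, rfl, rfl⟩ := List.exists_eq_cons_cons_of_flatten_eq_cons
        (fun s hs => (hF.1 s hs).ne_nil) hu
      refine (List.cons_le_cons a (ih hF.dropHead hG ?_)).trans
        (cons_flatten_merge_dropHead_le (hF.1 _ List.mem_cons_self) hF.2 hG.1)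
      rwa [flatten_dropHead_cons, hv]
    | right _ h =>
      obtain ⟨t, G, rfl, rfl⟩ := List.exists_eq_cons_cons_of_flatten_eq_cons
        (fun t ht => (hG.1 t ht).ne_nil) hv
      rw [List.merge_ge_comm hF.2 hG.2]
      refine (List.cons_le_cons a ?_).trans
        (cons_flatten_merge_dropHead_le (hG.1 _ List.mem_cons_self) hG.2 hF.1)
      rw [← List.merge_ge_comm hF.2 hG.dropHead.2]
      exact ih hF hG.dropHead (by rwa [flatten_dropHead_cons, hu])

theorem maxShuffle_eq_append_of_ordered_factorizations_general (n : ℕ)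
    (fs gs : List (List ℕ))
    (hfs_seg : ∀ w ∈ fs, IsSegment n w) (hfs_dec : List.Chain' (· ≥ ·) fs)
    (hgs_seg : ∀ w ∈ gs, IsSegment n w) (hgs_dec : List.Chain' (· ≥ ·) gs)
    (hcross : ∀ a ∈ fs.getLast?, ∀ b ∈ gs.head?, b ≤ a) :
    IsGreatest {w | IsShuffle fs.flatten gs.flatten w} (fs.flatten ++ gs.flatten) := by
  have hsorted : (fs ++ gs).SortedGE :=
    List.sortedGE_iff_isChain.mpr (List.isChain_append.mpr ⟨hfs_dec, hgs_dec, hcross⟩)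
  have hmerge : fs.merge gs (· ≥ ·) = fs ++ gs := List.merge_of_le fun a b ha hb => by
    simpa using (List.pairwise_append.mp hsorted.pairwise).2.2 a ha b hb
  refine ⟨IsShuffle.append_s2 _ _, fun w hw => ?_⟩
  have hF : IsDominantFactorization fs :=
    ⟨fun s hs => (hfs_seg s hs).isNatSegment, List.sortedGE_iff_isChain.mpr hfs_dec⟩
  have hG : IsDominantFactorization gs :=
    ⟨fun t ht => (hgs_seg t ht).isNatSegment, List.sortedGE_iff_isChain.mpr hgs_dec⟩
  simpa [hmerge] using le_flatten_merge_of_isShuffle hF hG hw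

/-- Let μ = i^(1) ⋯ i^(r) and μ' = i'^(1) ⋯ i'^(r') be dominant words given by their
canonical factorizations (weakly decreasing lists `fs`, `gs` of segments).  If the last
factor of μ is ≥ the first factor of μ', then the lexicographically greatest shuffle of
μ and μ' is the concatenation μμ'. -/
theorem maxShuffle_eq_append_of_ordered_factorizations (n : ℕ) (hn : 1 ≤ n)
    (fs gs : List (List ℕ))
    (hfs_seg : ∀ w ∈ fs, IsSegment n w) (hfs_dec : List.Chain' (· ≥ ·) fs)
    (hgs_seg : ∀ w ∈ gs, IsSegment n w) (hgs_dec : List.Chain' (· ≥ ·) gs)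
    (hcross : ∀ a ∈ fs.getLast?, ∀ b ∈ gs.head?, b ≤ a) :
    IsGreatest {w | IsShuffle fs.flatten gs.flatten w} (fs.flatten ++ gs.flatten) :=
  maxShuffle_eq_append_of_ordered_factorizations_general n fs gs hfs_seg hfs_dec hgs_seg hgs_dec
    hcross
end

section
/- Let R be a ring, (M, ≤) a partially ordered set, and b : M → R a map whose values form a ℤ-linearly independent family. Assume: (Decomposition) for all μ, ν ∈ M there is a finitely supported function a_{μ,ν} : M → ℤ with b(μ)·b(ν) = Σ_λ a_{μ,ν}(λ)·b(λ), such that a_{μ,ν} is positive on its support and its support is nonempty and has a greatest element with respect to ≤, denoted μ ⊙ ν; and (Monotonicity) for all μ, ν, λ ∈ M, μ ≤ ν implies λ ⊙ μ ≤ λ ⊙ ν and μ ⊙ λ ≤ ν ⊙ λ. Then the operation ⊙ is associative: (μ ⊙ ν) ⊙ λ = μ ⊙ (ν ⊙ λ) for all μ, ν, λ ∈ M. -/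
/-!
Expanding `(b μ * b ν) * b λ` and `b μ * (b ν * b λ)` in the basis `b` gives two coefficient
vectors, which coincide by associativity in `R` and linear independence of `b`. Since all
coefficients are positive, no cancellation occurs, and monotonicity of `⊙` shows that the
greatest parameter in the support of the first is `(μ ⊙ ν) ⊙ λ`, and of the second
`μ ⊙ (ν ⊙ λ)`.
-/

open Finsupp

namespace Finsupp

theorem isGreatest_support_sum_smul {S ι M : Type*} [Semiring S] [PartialOrder S]
    [IsStrictOrderedRing S] [PartialOrder M] {f : ι →₀ S} {g : ι → M →₀ S} {e : ι → M}
    {i₀ : ι} (hf : 0 ≤ f) (hg : ∀ i, 0 ≤ g i)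
    (he : ∀ i, IsGreatest ((g i).support : Set M) (e i)) (hi₀ : i₀ ∈ f.support)
    (hle : ∀ i ∈ f.support, e i ≤ e i₀) :
    IsGreatest ((f.sum fun i c => c • g i).support : Set M) (e i₀) := by
  classical
  have happly : ∀ x, (f.sum fun i c => c • g i) x = ∑ i ∈ f.support, f i * g i x := by
    intro x
    simp only [Finsupp.sum, Finset.sum_apply', smul_apply, smul_eq_mul]
  constructor
  · have htop : 0 < g i₀ (e i₀) := (hg i₀ _).lt_of_ne' (mem_support_iff.1 (he i₀).1)
    have hcoeff : 0 < f i₀ := (hf i₀).lt_of_ne' (mem_support_iff.1 hi₀)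
    refine mem_support_iff.2 (ne_of_gt ?_)
    rw [happly]
    exact Finset.sum_pos' (fun i _ => mul_nonneg (hf i) (hg i _))
      ⟨i₀, hi₀, mul_pos hcoeff htop⟩
  · intro x hx
    obtain ⟨i, hi, hxi⟩ := Finset.mem_biUnion.1 (support_sum hx)
    exact ((he i).2 (support_smul hxi)).trans (hle i hi)

end Finsupp

section StructureConstants

variable {S R M : Type*} [CommSemiring S] [Semiring R] [Module S R] {b : M → R}
  {a : M → M → M →₀ S}

theorem linearCombination_sum_smul_left [IsScalarTower S R R]
    (hdec : ∀ μ ν, b μ * b ν = linearCombination S b (a μ ν)) (μ ν l : M) :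
    linearCombination S b ((a μ ν).sum fun κ c => c • a κ l) = b μ * b ν * b l := by
  rw [map_finsuppSum, hdec μ ν, linearCombination_apply, Finsupp.sum_mul]
  refine Finsupp.sum_congr fun κ _ => ?_
  rw [map_smul, ← hdec κ l, smul_mul_assoc]

theorem linearCombination_sum_smul_right [SMulCommClass S R R]
    (hdec : ∀ μ ν, b μ * b ν = linearCombination S b (a μ ν)) (μ ν l : M) :
    linearCombination S b ((a ν l).sum fun κ c => c • a μ κ) = b μ * (b ν * b l) := by
  rw [map_finsuppSum, hdec ν l, linearCombination_apply, Finsupp.mul_sum]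
  refine Finsupp.sum_congr fun κ _ => ?_
  rw [map_smul, ← hdec μ κ, mul_smul_comm]

theorem sum_smul_structConst_assoc [IsScalarTower S R R] [SMulCommClass S R R]
    (hb : LinearIndependent S b)
    (hdec : ∀ μ ν, b μ * b ν = linearCombination S b (a μ ν)) (μ ν l : M) :
    ((a μ ν).sum fun κ c => c • a κ l) = (a ν l).sum fun κ c => c • a μ κ :=
  hb <| by
    rw [linearCombination_sum_smul_left hdec, linearCombination_sum_smul_right hdec, mul_assoc]

end StructureConstants

/-- Abstract decomposition property of a Grothendieck ring with basis `b` indexed by a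
poset `M`: the product of two basis elements decomposes with positive coefficients, the
set of parameters in the decomposition having a greatest element `μ ⊙ ν`.  If `⊙` is
monotone in each argument, then `⊙` is associative. -/
theorem odot_assoc {R M : Type*} [Ring R] [PartialOrder M]
    (b : M → R) (hb : LinearIndependent ℤ b)
    (a : M → M → (M →₀ ℤ))
    (odot : M → M → M)
    (hdec : ∀ μ ν, b μ * b ν = (a μ ν).sum fun l c => c • b l)
    (hpos : ∀ μ ν l, l ∈ (a μ ν).support → 0 < a μ ν l)
    (hgr : ∀ μ ν, IsGreatest ((a μ ν).support : Set M) (odot μ ν))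
    (hmono : ∀ μ ν l : M, μ ≤ ν → odot l μ ≤ odot l ν ∧ odot μ l ≤ odot ν l) :
    ∀ μ ν l : M, odot (odot μ ν) l = odot μ (odot ν l) := by
  intro μ ν l
  have hdec' : ∀ μ ν, b μ * b ν = linearCombination ℤ b (a μ ν) := fun μ ν => by
    rw [hdec, linearCombination_apply]
  have hnonneg : ∀ μ ν, 0 ≤ a μ ν := fun μ ν κ => by
    by_cases hκ : κ ∈ (a μ ν).support
    · exact (hpos μ ν κ hκ).le
    · exact (notMem_support_iff.1 hκ).ge
  have hleft := isGreatest_support_sum_smul (hnonneg μ ν) (fun κ => hnonneg κ l)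
    (fun κ => hgr κ l) (hgr μ ν).1 fun κ hκ => (hmono κ (odot μ ν) l ((hgr μ ν).2 hκ)).2
  have hright := isGreatest_support_sum_smul (hnonneg ν l) (fun κ => hnonneg μ κ)
    (fun κ => hgr μ κ) (hgr ν l).1 fun κ hκ => (hmono κ (odot ν l) μ ((hgr ν l).2 hκ)).1
  rw [sum_smul_structConst_assoc hb hdec'] at hleft
  exact hleft.unique hright
end

section
/- Let R be a commutative integral domain with fraction field F, (M, ≤) a partially ordered set, and b : M → R a map whose values are nonzero and form a ℤ-linearly independent family. Assume: (Decomposition) for all μ, ν ∈ M, b(μ)·b(ν) = Σ_λ a_{μ,ν}(λ)·b(λ) for a finitely supported a_{μ,ν} : M → ℤ that is positive on its support, the support being nonempty with a greatest element denoted μ ⊙ ν; and (Strict monotonicity) for all μ, ν, λ ∈ M, μ < ν implies λ ⊙ μ < λ ⊙ ν. Then (M, ⊙) is a commutative monoid-like ordered structure; let G denote its Grothendieck group. Call p ∈ R pointed if p = Σ_λ c(λ)·b(λ) for a finitely supported c : M → ℤ whose support is nonempty and has a greatest element, denoted Ψ(p) ∈ M. Fix μ_1, …, μ_m ∈ M.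 If α, β ∈ ℤ^m and p, q ∈ R are pointed elements such that (∏_{i=1}^m b(μ_i)^{α_i})·p = (∏_{i=1}^m b(μ_i)^{β_i})·q holds in F, then μ_1^{α_1} ⊙ ⋯ ⊙ μ_m^{α_m} ⊙ Ψ(p) = μ_1^{β_1} ⊙ ⋯ ⊙ μ_m^{β_m} ⊙ Ψ(q) holds in G, where negative powers are taken in the Grothendieck group G. -/
/-- Iterated `⊙`-product `x ⊙ μ_1^{e_1} ⊙ ⋯ ⊙ μ_m^{e_m}` (with a fixed association order). -/
def oprod {M : Type*} (odot : M → M → M) (x : M) {m : ℕ} (μs : Fin m → M)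
    (e : Fin m → ℕ) : M :=
  (List.finRange m).foldl (fun acc i => (fun y => odot y (μs i))^[e i] acc) x

section Aux
variable {R M : Type*} [CommRing R] [IsDomain R] [PartialOrder M]

/-- `p` is a pointed element with parameter `Ψ`. -/
def PointedWith (b : M → R) (p : R) (Ψ : M) : Prop :=
  ∃ c : M →₀ ℤ, p = Finsupp.linearCombination ℤ b c ∧ IsGreatest (c.support : Set M) Ψ

variable {b : M → R} {a : M → M → (M →₀ ℤ)} {odot : M → M → M}

lemma pointed_mul
    (hdec : ∀ μ ν, b μ * b ν = (a μ ν).sum fun l c => c • b l)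
    (hpos : ∀ μ ν l, l ∈ (a μ ν).support → 0 < a μ ν l)
    (hgr : ∀ μ ν, IsGreatest ((a μ ν).support : Set M) (odot μ ν))
    (hmono : ∀ μ ν l : M, μ < ν → odot l μ < odot l ν)
    (μ : M) {p : R} {Ψ : M} (h : PointedWith b p Ψ) :
    PointedWith b (b μ * p) (odot μ Ψ) := by
  classical
  obtain ⟨c, rfl, hc⟩ := h
  have wmono : ∀ {x y : M}, x ≤ y → odot μ x ≤ odot μ y := by
    intro x y hxy
    rcases eq_or_lt_of_le hxy with h | h
    · exact le_of_eq (by rw [h])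
    · exact (hmono _ _ _ h).le
  refine ⟨c.sum fun l k => k • a μ l, ?_, ?_, ?_⟩
  · rw [map_finsuppSum, Finsupp.linearCombination_apply, Finsupp.mul_sum]
    refine Finsupp.sum_congr fun l _ => ?_
    rw [map_smul, Finsupp.linearCombination_apply, ← hdec μ l, mul_smul_comm]
  · -- membership : coefficient at `odot μ Ψ` is nonzero
    simp only [Finset.mem_coe, Finsupp.mem_support_iff]
    rw [Finsupp.sum_apply]
    rw [Finsupp.sum]
    rw [Finset.sum_eq_single Ψ]
    · simp only [Finsupp.smul_apply, smul_eq_mul]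
      exact mul_ne_zero (Finsupp.mem_support_iff.mp hc.1)
        (ne_of_gt (hpos μ Ψ _ (hgr μ Ψ).1))
    · intro l hl hlΨ
      have hlt : odot μ l < odot μ Ψ := hmono _ _ _ (lt_of_le_of_ne (hc.2 hl) hlΨ)
      have : a μ l (odot μ Ψ) = 0 := by
        by_contra h0
        exact absurd ((hgr μ l).2 (Finsupp.mem_support_iff.mpr h0)) (not_le_of_gt hlt)
      simp [this]
    · intro hΨ; exact absurd hc.1 hΨ
  · -- upper bound
    intro x hx
    have := Finsupp.support_sum hx
    simp only [Finset.mem_biUnion] at this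
    obtain ⟨l, hl, hxl⟩ := this
    have hxl' : x ∈ (a μ l).support := Finsupp.support_smul hxl
    exact le_trans ((hgr μ l).2 hxl') (wmono (hc.2 hl))

end Aux

section More
variable {R M : Type*} [CommRing R] [IsDomain R] [PartialOrder M]
variable {b : M → R} {a : M → M → (M →₀ ℤ)} {odot : M → M → M}

lemma odot_comm (hb : LinearIndependent ℤ b)
    (hdec : ∀ μ ν, b μ * b ν = (a μ ν).sum fun l c => c • b l)
    (hgr : ∀ μ ν, IsGreatest ((a μ ν).support : Set M) (odot μ ν)) (μ ν : M) :
    odot μ ν = odot ν μ := by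
  have ha : a μ ν = a ν μ := by
    apply hb
    rw [Finsupp.linearCombination_apply, Finsupp.linearCombination_apply,
      ← hdec, ← hdec, mul_comm]
  exact (hgr μ ν).unique (by rw [ha]; exact hgr ν μ)

lemma pointed_pow (hb : LinearIndependent ℤ b)
    (hdec : ∀ μ ν, b μ * b ν = (a μ ν).sum fun l c => c • b l)
    (hpos : ∀ μ ν l, l ∈ (a μ ν).support → 0 < a μ ν l)
    (hgr : ∀ μ ν, IsGreatest ((a μ ν).support : Set M) (odot μ ν))
    (hmono : ∀ μ ν l : M, μ < ν → odot l μ < odot l ν)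
    (μ : M) (n : ℕ) {p : R} {Ψ : M} (h : PointedWith b p Ψ) :
    PointedWith b (b μ ^ n * p) ((fun y => odot y μ)^[n] Ψ) := by
  induction n generalizing p Ψ with
  | zero => simpa using h
  | succ n ih =>
    have h1 : PointedWith b (b μ * p) (odot Ψ μ) := by
      rw [odot_comm hb hdec hgr]
      exact pointed_mul hdec hpos hgr hmono μ h
    have := ih h1
    rw [Function.iterate_succ_apply, show b μ ^ (n + 1) * p = b μ ^ n * (b μ * p) by ring]
    exact this

lemma pointed_list (hb : LinearIndependent ℤ b)
    (hdec : ∀ μ ν, b μ * b ν = (a μ ν).sum fun l c => c • b l)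
    (hpos : ∀ μ ν l, l ∈ (a μ ν).support → 0 < a μ ν l)
    (hgr : ∀ μ ν, IsGreatest ((a μ ν).support : Set M) (odot μ ν))
    (hmono : ∀ μ ν l : M, μ < ν → odot l μ < odot l ν)
    {m : ℕ} (μs : Fin m → M) (e : Fin m → ℕ) (L : List (Fin m))
    {p : R} {Ψ : M} (h : PointedWith b p Ψ) :
    PointedWith b ((L.map fun i => b (μs i) ^ e i).prod * p)
      (L.foldl (fun acc i => (fun y => odot y (μs i))^[e i] acc) Ψ) := by
  induction L generalizing p Ψ with
  | nil => simpa using h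
  | cons i L ih =>
    have h1 := pointed_pow hb hdec hpos hgr hmono (μs i) (e i) h
    have := ih h1
    simp only [List.map_cons, List.prod_cons, List.foldl_cons]
    rw [mul_comm (b (μs i) ^ e i), mul_assoc]
    exact this

lemma pointed_unique (hb : LinearIndependent ℤ b) {p : R} {Ψ₁ Ψ₂ : M}
    (h1 : PointedWith b p Ψ₁) (h2 : PointedWith b p Ψ₂) : Ψ₁ = Ψ₂ := by
  obtain ⟨c1, rfl, hc1⟩ := h1
  obtain ⟨c2, he, hc2⟩ := h2
  have : c1 = c2 := hb he
  subst this
  exact hc1.unique hc2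

end More

/-- Well-definedness of the generalized parameter map `Ψ̃` on the Grothendieck ring of a
monoidal categorification:  if `R` is a commutative domain with fraction field `F`, the
classes `b(μ)` of simples are nonzero and ℤ-linearly independent, products of classes
decompose positively with greatest parameter `μ ⊙ ν`, and `⊙` is strictly monotone, then
an equality `(∏ b(μ_i)^{α_i})·p = (∏ b(μ_i)^{β_i})·q` in `F` between pointed elements
implies `μ_1^{α_1} ⊙ ⋯ ⊙ μ_m^{α_m} ⊙ Ψ(p) = μ_1^{β_1} ⊙ ⋯ ⊙ μ_m^{β_m} ⊙ Ψ(q)` in the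
Grothendieck group `G` of `(M, ⊙)` (equality in `G` being expressed by clearing the
negative exponents by a common shift `γ` and multiplying by a common `λ ∈ M`). -/
theorem generalized_parameter_well_defined {R M : Type*} [CommRing R] [IsDomain R]
    [PartialOrder M]
    (b : M → R) (hb0 : ∀ μ, b μ ≠ 0) (hb : LinearIndependent ℤ b)
    (a : M → M → (M →₀ ℤ))
    (odot : M → M → M)
    (hdec : ∀ μ ν, b μ * b ν = (a μ ν).sum fun l c => c • b l)
    (hpos : ∀ μ ν l, l ∈ (a μ ν).support → 0 < a μ ν l)
    (hgr : ∀ μ ν, IsGreatest ((a μ ν).support : Set M) (odot μ ν))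
    (hmono : ∀ μ ν l : M, μ < ν → odot l μ < odot l ν)
    (m : ℕ) (μs : Fin m → M) (α β : Fin m → ℤ)
    (p q : R) (cp cq : M →₀ ℤ)
    (hp : p = cp.sum fun l k => k • b l) (hq : q = cq.sum fun l k => k • b l)
    (Ψp Ψq : M)
    (hΨp : IsGreatest (cp.support : Set M) Ψp)
    (hΨq : IsGreatest (cq.support : Set M) Ψq)
    (heq : (∏ i, (algebraMap R (FractionRing R) (b (μs i))) ^ (α i)) *
            algebraMap R (FractionRing R) p
         = (∏ i, (algebraMap R (FractionRing R) (b (μs i))) ^ (β i)) *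
            algebraMap R (FractionRing R) q) :
    ∀ γ : Fin m → ℕ, (∀ i, 0 ≤ α i + (γ i : ℤ)) → (∀ i, 0 ≤ β i + (γ i : ℤ)) →
      ∃ l : M,
        odot (oprod odot Ψp μs fun i => (α i + (γ i : ℤ)).toNat) l
          = odot (oprod odot Ψq μs fun i => (β i + (γ i : ℤ)).toNat) l := by
  intro γ hα hβ
  set f := algebraMap R (FractionRing R) with hf
  have hfinj : Function.Injective f := IsFractionRing.injective R (FractionRing R)
  have hfb : ∀ i, f (b (μs i)) ≠ 0 := fun i => fun h => hb0 (μs i) (hfinj (by simpa using h))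
  -- clear denominators
  have key : ∀ (δ : Fin m → ℤ), (∀ i, 0 ≤ δ i + (γ i : ℤ)) →
      (∏ i, f (b (μs i)) ^ δ i) * (∏ i, f (b (μs i)) ^ (γ i)) =
      ∏ i, f (b (μs i)) ^ ((δ i + (γ i : ℤ)).toNat) := by
    intro δ hδ
    rw [← Finset.prod_mul_distrib]
    refine Finset.prod_congr rfl fun i _ => ?_
    rw [← zpow_natCast (f (b (μs i))) ((δ i + (γ i : ℤ)).toNat),
      Int.toNat_of_nonneg (hδ i), zpow_add₀ (hfb i), zpow_natCast]
  have heq2 : (∏ i, b (μs i) ^ ((α i + (γ i : ℤ)).toNat)) * p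
      = (∏ i, b (μs i) ^ ((β i + (γ i : ℤ)).toNat)) * q := by
    apply hfinj
    rw [map_mul, map_mul, map_prod, map_prod]
    simp only [map_pow]
    rw [← key α hα, ← key β hβ]
    rw [mul_comm _ (∏ i, f (b (μs i)) ^ (γ i)), mul_comm _ (∏ i, f (b (μs i)) ^ (γ i)),
      mul_assoc, mul_assoc, heq]
  -- pointedness of both sides
  have hpp : PointedWith b p Ψp := ⟨cp, by rw [hp, Finsupp.linearCombination_apply], hΨp⟩
  have hqq : PointedWith b q Ψq := ⟨cq, by rw [hq, Finsupp.linearCombination_apply], hΨq⟩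
  have hprod : ∀ (e : Fin m → ℕ), (∏ i, b (μs i) ^ e i)
      = ((List.finRange m).map fun i => b (μs i) ^ e i).prod := by
    intro e
    rw [Fin.prod_univ_def]
  have h1 := pointed_list hb hdec hpos hgr hmono μs (fun i => (α i + (γ i : ℤ)).toNat)
    (List.finRange m) hpp
  have h2 := pointed_list hb hdec hpos hgr hmono μs (fun i => (β i + (γ i : ℤ)).toNat)
    (List.finRange m) hqq
  rw [← hprod] at h1 h2
  rw [heq2] at h1
  have := pointed_unique hb h1 h2
  exact ⟨Ψp, by rw [oprod, oprod, this]⟩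
end

section
/- Let n ≥ 1 and 1 ≤ k ≤ n. Let the symmetric group S_{n+1} act on ℤ^{n+1} by permuting coordinates, let s_i denote the transposition exchanging i and i+1, let e_1,…,e_{n+1} be the standard basis, ω_k = e_1 + ⋯ + e_k, and α_i = e_i − e_{i+1} for 1 ≤ i ≤ n. Let w = s_1 · (s_2 s_1) · (s_3 s_2 s_1) ⋯ (s_{n−1} s_{n−2} ⋯ s_1) · (s_ن s_{n−1} ⋯ s_k) ∈ S_{n+1}, the product of group elements written so that the rightmost factor acts first (for k = n the last block is just s_n). Then ω_k − w(ω_k) = Σ_{i=1}^{n} min(i, n+1−i, k, n+1−k) · α_i. In particular, for 1 ≤ k ≤ n/2 the values k and n−k+1 of the parameter give the same element Σ_{i=1}^{n} min(i, n+1−i, k) · α_i. -/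
/-- The simple transposition `s_i = (i, i+1)` of `S_{n+1}` (coordinates labelled 1,…,n+1,
realized on `Fin (n+1)`), for `1 ≤ i ≤ n`; the identity otherwise. -/
def sTr (n i : ℕ) : Equiv.Perm (Fin (n + 1)) :=
  if h : 1 ≤ i ∧ i ≤ n then
    Equiv.swap ⟨i - 1, by omega⟩ ⟨i, by omega⟩
  else 1

/-- The product `s_a · s_{a-1} ⋯ s_b` (rightmost factor acting first). -/
def descChain (n a b : ℕ) : Equiv.Perm (Fin (n + 1)) :=
  ((List.range' b (a + 1 - b)).reverse.map (sTr n)).prod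

/-- The Weyl group element `w = s_1 · (s_2 s_1) · (s_3 s_2 s_1) ⋯ (s_{n-1} ⋯ s_1) ·
(s_n s_{n-1} ⋯ s_k)`. -/
def wElt (n k : ℕ) : Equiv.Perm (Fin (n + 1)) :=
  (((List.range' 1 (n - 1)).map fun j => descChain n j 1).prod) * descChain n n k

/-- The standard basis vector `e_j` of ℤ^{n+1} (coordinates labelled 1,…,n+1). -/
def eV (n j : ℕ) : Fin (n + 1) → ℤ := fun x => if (x : ℕ) + 1 = j then 1 else 0

/-- The fundamental weight `ω_k = e_1 + ⋯ + e_k`. -/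
def omegaV (n k : ℕ) : Fin (n + 1) → ℤ := fun x => if (x : ℕ) + 1 ≤ k then 1 else 0

/-- The simple root `α_i = e_i − e_{i+1}`. -/
def alphaV (n i : ℕ) : Fin (n + 1) → ℤ := eV n i - eV n (i + 1)

/-- The action of `S_{n+1}` on ℤ^{n+1} permuting coordinates: `(σ • v)_i = v_{σ⁻¹(i)}`. -/
def permAct (n : ℕ) (σ : Equiv.Perm (Fin (n + 1))) (v : Fin (n + 1) → ℤ) :
    Fin (n + 1) → ℤ := fun x => v (σ.symm x)

lemma sTr_apply (n i : ℕ) (h1 : 1 ≤ i) (h2 : i ≤ n) (x : Fin (n + 1)) :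
    ((sTr n i x : ℕ)) = if (x : ℕ) = i - 1 then i else if (x : ℕ) = i then i - 1 else x := by
  rw [sTr, dif_pos ⟨h1, h2⟩]
  by_cases hx1 : (x : ℕ) = i - 1
  · have hx : x = (⟨i - 1, by omega⟩ : Fin (n + 1)) := Fin.ext hx1
    rw [hx, Equiv.swap_apply_left, if_pos rfl]
  · by_cases hx2 : (x : ℕ) = i
    · have hx : x = (⟨i, by omega⟩ : Fin (n + 1)) := Fin.ext hx2
      rw [hx, Equiv.swap_apply_right, if_neg (show ¬ (i = i - 1) by omega), if_pos rfl]
    · rw [Equiv.swap_apply_of_ne_of_ne (Fin.ne_of_val_ne hx1) (Fin.ne_of_val_ne hx2),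
        if_neg hx1, if_neg hx2]

lemma descChain_apply (n a b : ℕ) (hb : 1 ≤ b) (hba : b ≤ a) (ha : a ≤ n) (x : Fin (n + 1)) :
    ((descChain n a b x : ℕ)) =
      if (x : ℕ) = b - 1 then a
      else if b ≤ (x : ℕ) ∧ (x : ℕ) ≤ a then (x : ℕ) - 1 else x := by
  induction a, hba using Nat.le_induction with
  | base =>
    have h : b + 1 - b = 1 := by omega
    rw [descChain, h, List.range'_one]
    simp only [List.reverse_singleton, List.map_singleton, List.prod_singleton]
    rw [sTr_apply n b hb ha]
    split_ifs <;> omega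
  | succ a hba ih =>
    have ha' : a ≤ n := by omega
    have hstep : descChain n (a + 1) b = sTr n (a + 1) * descChain n a b := by
      unfold descChain
      rw [show a + 1 + 1 - b = (a + 1 - b) + 1 by omega, List.range'_concat,
        List.reverse_append, List.reverse_singleton, List.singleton_append,
        List.map_cons, List.prod_cons, show b + 1 * (a + 1 - b) = a + 1 by omega]
    rw [hstep, Equiv.Perm.mul_apply, sTr_apply n (a + 1) (by omega) (by omega)]
    have hv := ih ha'
    have hlt := (descChain n a b x).isLt
    have hxlt := x.isLt
    split_ifs at hv ⊢ <;> omega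

lemma prefixP_apply (n m : ℕ) (hm : m ≤ n) (x : Fin (n + 1)) :
    ((((List.range' 1 m).map fun j => descChain n j 1).prod x : ℕ)) =
      if (x : ℕ) ≤ m then m - (x : ℕ) else x := by
  revert hm x
  induction m with
  | zero =>
    intro hm x
    simp only [List.range'_zero, List.map_nil, List.prod_nil, Equiv.Perm.one_apply]
    have := x.isLt
    split_ifs <;> omega
  | succ m ih =>
    intro hm x
    have hm' : m ≤ n := by omega
    rw [List.range'_concat, List.map_append, List.map_singleton, List.prod_append,
      List.prod_singleton, Equiv.Perm.mul_apply]
    have hv := descChain_apply n (1 + 1 * m) 1 le_rfl (by omega) (by omega) x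
    rw [ih hm' (descChain n (1 + 1 * m) 1 x)]

    have hxlt := x.isLt
    have hlt := (descChain n (1 + 1 * m) 1 x).isLt
    split_ifs at hv ⊢ <;> omega

lemma wElt_apply (n k : ℕ) (hn : 1 ≤ n) (hk1 : 1 ≤ k) (hk2 : k ≤ n) (x : Fin (n + 1)) :
    ((wElt n k x : ℕ)) =
      if (x : ℕ) = k - 1 then n
      else if (x : ℕ) < k - 1 then n - 1 - (x : ℕ) else n - (x : ℕ) := by
  rw [wElt, Equiv.Perm.mul_apply]
  have hv := descChain_apply n n k hk1 hk2 le_rfl x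
  rw [prefixP_apply n (n - 1) (by omega) (descChain n n k x)]
  have hxlt := x.isLt
  have hlt := (descChain n n k x).isLt
  split_ifs at hv ⊢ <;> omega

lemma sum_alpha (n : ℕ) (c : ℕ → ℤ) (x : Fin (n + 1)) :
    (∑ i ∈ Finset.Icc 1 n, c i • alphaV n i) x =
      (if (x : ℕ) + 1 ≤ n then c ((x : ℕ) + 1) else 0) -
      (if 1 ≤ (x : ℕ) then c (x : ℕ) else 0) := by
  have hxlt := x.isLt
  simp only [Finset.sum_apply, Pi.smul_apply, alphaV, Pi.sub_apply, eV, smul_eq_mul,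
    mul_sub, Finset.sum_sub_distrib]
  congr 1
  · rw [show (∑ i ∈ Finset.Icc 1 n, c i * if (x : ℕ) + 1 = i then 1 else 0) =
        ∑ i ∈ Finset.Icc 1 n, if i = (x : ℕ) + 1 then c i else 0 from
      Finset.sum_congr rfl fun i _ => by
        rw [mul_ite, mul_one, mul_zero]; exact if_congr eq_comm rfl rfl]
    rw [Finset.sum_ite_eq' (Finset.Icc 1 n) ((x : ℕ) + 1) c]
    simp only [Finset.mem_Icc]
    split_ifs <;> first | rfl | omega
  · rw [show (∑ i ∈ Finset.Icc 1 n, c i * if (x : ℕ) + 1 = i + 1 then 1 else 0) =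
        ∑ i ∈ Finset.Icc 1 n, if i = (x : ℕ) then c i else 0 from
      Finset.sum_congr rfl fun i _ => by
        rw [mul_ite, mul_one, mul_zero]; exact if_congr (by omega) rfl rfl]
    rw [Finset.sum_ite_eq' (Finset.Icc 1 n) ((x : ℕ)) c]
    simp only [Finset.mem_Icc]
    split_ifs <;> first | rfl | omega

lemma main_part (n k : ℕ) (hn : 1 ≤ n) (hk1 : 1 ≤ k) (hk2 : k ≤ n) :
    omegaV n k - permAct n (wElt n k) (omegaV n k)
      = ∑ i ∈ Finset.Icc 1 n,
          ((min (min i (n + 1 - i)) (min k (n + 1 - k)) : ℕ) : ℤ) • alphaV n i := by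
  funext x
  have hz : wElt n k ((wElt n k).symm x) = x := Equiv.apply_symm_apply _ _
  have hv := wElt_apply n k hn hk1 hk2 ((wElt n k).symm x)
  rw [hz] at hv
  have hzlt := ((wElt n k).symm x).isLt
  have hxlt := x.isLt
  rw [sum_alpha n (fun i => ((min (min i (n + 1 - i)) (min k (n + 1 - k)) : ℕ) : ℤ)) x]
  simp only [Pi.sub_apply, permAct, omegaV]
  split_ifs at hv ⊢ <;> push_cast <;> omega

/-- For `1 ≤ k ≤ n` and `w = s_1 (s_2 s_1) ⋯ (s_{n-1} ⋯ s_1)(s_n ⋯ s_k)`: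
`ω_k − w(ω_k) = Σ_{i=1}^{n} min(i, n+1−i, k, n+1−k) · α_i`.  In particular, for
`2k ≤ n` the parameters `k` and `n−k+1` give the same element
`Σ_{i=1}^{n} min(i, n+1−i, k) · α_i`. -/
theorem weight_of_frozen_determinantial_module (n k : ℕ) (hn : 1 ≤ n)
    (hk1 : 1 ≤ k) (hk2 : k ≤ n) :
    (omegaV n k - permAct n (wElt n k) (omegaV n k)
        = ∑ i ∈ Finset.Icc 1 n,
            ((min (min i (n + 1 - i)) (min k (n + 1 - k)) : ℕ) : ℤ) • alphaV n i) ∧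
    (2 * k ≤ n →
      omegaV n k - permAct n (wElt n k) (omegaV n k)
          = ∑ i ∈ Finset.Icc 1 n, ((min (min i (n + 1 - i)) k : ℕ) : ℤ) • alphaV n i ∧
      omegaV n (n - k + 1) - permAct n (wElt n (n - k + 1)) (omegaV n (n - k + 1))
          = ∑ i ∈ Finset.Icc 1 n, ((min (min i (n + 1 - i)) k : ℕ) : ℤ) • alphaV n i) := by
  refine ⟨main_part n k hn hk1 hk2, fun h2k => ⟨?_, ?_⟩⟩
  · rw [main_part n k hn hk1 hk2]
    exact Finset.sum_congr rfl fun i _ => by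
      congr 2
      omega
  · rw [main_part n (n - k + 1) hn (by omega) (by omega)]
    exact Finset.sum_congr rfl fun i _ => by
      congr 2
      omega
end
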